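/- arXiv:1109.1228 — 12 statements merged into one kernel-verified Lean document; each statement's English description precedes it below -/
import Mathlib

section
/- Let a, b, c be positive, pairwise coprime, squarefree integers. If bc is a square modulo a, ac is a square modulo b, and -ab is a square modulo c, then the equation a·x² + b·y² = c·z² has a solution in integers x, y, z not all zero. -/
/-!
Choose `u, v, w` with `u² ≡ bc (mod a)`, `v² ≡ ac (mod b)`, `w² ≡ -ab (mod c)`. Modulo `a`,
`b (ax² + by² - cz²) ≡ (by - uz)(by + uz)`, and similarly modulo `b` and `c`; so on the lattice cut
out by `a ∣ by - uz`, `b ∣ ax - vz`, `c ∣ ax - wy` the form `Q = ax² + by² - cz²` is divisible by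
`abc`. That lattice has index at most `abc`, so by pigeonhole it has a nonzero point with
`x² ≤ bc`, `y² < ac`, `z² < ab`. Then `-abc < Q < 2abc`, hence `Q = 0` or `Q = abc`, and in the
second case `(ax² + by²)(z² + ab) = a(xz + by)² + b(yz - ax)²` turns `(x, y, z)` into a solution.
-/

theorem intCast_zmod_toNat_eq_zero_iff_dvd {n : ℤ} (hn : 0 ≤ n) (m : ℤ) :
    (m : ZMod n.toNat) = 0 ↔ n ∣ m := by
  rw [ZMod.intCast_zmod_eq_zero_iff_dvd, Int.toNat_of_nonneg hn]

theorem exists_sq_sub_dvd_of_isSquare {n m : ℤ} (hn : 0 ≤ n)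
    (h : IsSquare (m : ZMod n.toNat)) :
    ∃ u : ℤ, n ∣ u ^ 2 - m := by
  obtain ⟨r, hr⟩ := h
  obtain ⟨u, rfl⟩ := ZMod.intCast_surjective r
  refine ⟨u, (intCast_zmod_toNat_eq_zero_iff_dvd hn _).mp ?_⟩
  push_cast
  rw [hr]
  ring

theorem dvd_mul_sq_sub_mul_sq {n s t u X Y : ℤ} (hs : IsCoprime n s) (hu : n ∣ u ^ 2 - s * t)
    (hL : n ∣ s * X - u * Y) : n ∣ s * X ^ 2 - t * Y ^ 2 := by
  refine hs.dvd_of_dvd_mul_left ?_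
  have hfactor : s * (s * X ^ 2 - t * Y ^ 2) =
      (s * X - u * Y) * (s * X + u * Y) + (u ^ 2 - s * t) * Y ^ 2 := by ring
  rw [hfactor]
  exact dvd_add (dvd_mul_of_dvd_left hL _) (dvd_mul_of_dvd_left hu _)

theorem mul_mul_dvd_form_of_dvd_sub {a b c u v w x y z : ℤ}
    (hab : IsCoprime a b) (hbc : IsCoprime b c) (hac : IsCoprime a c)
    (hu : a ∣ u ^ 2 - b * c) (hv : b ∣ v ^ 2 - a * c) (hw : c ∣ w ^ 2 + a * b)
    (hx : a ∣ b * y - u * z) (hy : b ∣ a * x - v * z) (hz : c ∣ a * x - w * y) :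
    a * b * c ∣ a * x ^ 2 + b * y ^ 2 - c * z ^ 2 := by
  have hQa : a ∣ a * x ^ 2 + b * y ^ 2 - c * z ^ 2 := by
    rw [show a * x ^ 2 + b * y ^ 2 - c * z ^ 2 = a * x ^ 2 + (b * y ^ 2 - c * z ^ 2) by ring]
    exact dvd_add (dvd_mul_right a _) (dvd_mul_sq_sub_mul_sq hab hu hx)
  have hQb : b ∣ a * x ^ 2 + b * y ^ 2 - c * z ^ 2 := by
    rw [show a * x ^ 2 + b * y ^ 2 - c * z ^ 2 = a * x ^ 2 - c * z ^ 2 + b * y ^ 2 by ring]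
    exact dvd_add (dvd_mul_sq_sub_mul_sq hab.symm hv hy) (dvd_mul_right b _)
  have hQc : c ∣ a * x ^ 2 + b * y ^ 2 - c * z ^ 2 := by
    have hw' : c ∣ w ^ 2 - a * -b := by rwa [mul_neg, sub_neg_eq_add]
    rw [show a * x ^ 2 + b * y ^ 2 - c * z ^ 2 = a * x ^ 2 - -b * y ^ 2 - c * z ^ 2 by ring]
    exact dvd_sub (dvd_mul_sq_sub_mul_sq hac.symm hw' hz) (dvd_mul_right c _)
  exact (hac.mul_left hbc).mul_dvd (hab.mul_dvd hQa hQb) hQc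

theorem exists_ne_zero_abs_le_map_eq_zero {G : Type*} [AddGroup G] [Finite G]
    (f : ℤ × ℤ × ℤ →+ G) (X Y Z : ℕ) (h : Nat.card G < (X + 1) * (Y + 1) * (Z + 1)) :
    ∃ v : ℤ × ℤ × ℤ, v ≠ 0 ∧ |v.1| ≤ X ∧ |v.2.1| ≤ Y ∧ |v.2.2| ≤ Z ∧ f v = 0 := by
  have := Fintype.ofFinite G
  let box : Finset (ℤ × ℤ × ℤ) :=
    Finset.Icc 0 (X : ℤ) ×ˢ Finset.Icc 0 (Y : ℤ) ×ˢ Finset.Icc 0 (Z : ℤ)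
  have hcard : (Finset.univ : Finset G).card < box.card := by
    simpa [box, Nat.card_eq_fintype_card, mul_assoc] using h
  obtain ⟨s, hs, t, ht, hst, hf⟩ :=
    Finset.exists_ne_map_eq_of_card_lt_of_maps_to hcard (f := f) fun _ _ => Finset.mem_univ _
  simp only [box, Finset.mem_product, Finset.mem_Icc] at hs ht
  refine ⟨s - t, sub_ne_zero.mpr hst, ?_, ?_, ?_, by rw [map_sub, hf, sub_self]⟩ <;>
    simp only [Prod.fst_sub, Prod.snd_sub, abs_sub_le_iff] <;> omega

theorem exists_abs_le_dvd_sub {a b c : ℤ} (ha : 0 < a) (hb : 0 < b) (hc : 0 < c) (u v w : ℤ)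
    {X Y Z : ℕ} (hvol : a * b * c < (X + 1) * (Y + 1) * (Z + 1)) :
    ∃ x y z : ℤ, ¬(x = 0 ∧ y = 0 ∧ z = 0) ∧ |x| ≤ X ∧ |y| ≤ Y ∧ |z| ≤ Z ∧
      a ∣ b * y - u * z ∧ b ∣ a * x - v * z ∧ c ∣ a * x - w * y := by
  have : NeZero a.toNat := ⟨by omega⟩
  have : NeZero b.toNat := ⟨by omega⟩
  have : NeZero c.toNat := ⟨by omega⟩
  let f : ℤ × ℤ × ℤ →+ ZMod a.toNat × ZMod b.toNat × ZMod c.toNat :=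
    AddMonoidHom.mk' (fun t => (((b * t.2.1 - u * t.2.2 : ℤ) : ZMod a.toNat),
      ((a * t.1 - v * t.2.2 : ℤ) : ZMod b.toNat), ((a * t.1 - w * t.2.1 : ℤ) : ZMod c.toNat)))
      fun s t => by
        ext <;> simp only [Prod.fst_add, Prod.snd_add, Prod.mk_add_mk] <;> push_cast <;> ring
  have hcard :
      Nat.card (ZMod a.toNat × ZMod b.toNat × ZMod c.toNat) < (X + 1) * (Y + 1) * (Z + 1) := by
    simp only [Nat.card_prod, Nat.card_zmod]
    zify
    simpa [Int.toNat_of_nonneg, ha.le, hb.le, hc.le, mul_assoc] using hvol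
  obtain ⟨⟨x, y, z⟩, hne, hx, hy, hz, hdvd⟩ := exists_ne_zero_abs_le_map_eq_zero f X Y Z hcard
  simp only [f, AddMonoidHom.mk'_apply, Prod.mk_eq_zero, intCast_zmod_toNat_eq_zero_iff_dvd ha.le,
    intCast_zmod_toNat_eq_zero_iff_dvd hb.le, intCast_zmod_toNat_eq_zero_iff_dvd hc.le] at hdvd
  exact ⟨x, y, z, by simpa using hne, hx, hy, hz, hdvd⟩

theorem exists_sq_le_lt_sq {n : ℤ} (hn : 0 ≤ n) :
    ∃ X : ℕ, (X : ℤ) ^ 2 ≤ n ∧ n < ((X : ℤ) + 1) ^ 2 := by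
  refine ⟨Nat.sqrt n.toNat, ?_, ?_⟩
  · have := Nat.sqrt_le' n.toNat
    zify at this
    rwa [Int.toNat_of_nonneg hn] at this
  · have := Nat.lt_succ_sqrt' n.toNat
    zify at this
    rwa [Int.toNat_of_nonneg hn] at this

theorem exists_sq_lt_le_sq {n : ℤ} (hn : 0 < n) :
    ∃ X : ℕ, (X : ℤ) ^ 2 < n ∧ n ≤ ((X : ℤ) + 1) ^ 2 := by
  obtain ⟨X, hX, hX'⟩ := exists_sq_le_lt_sq (n := n - 1) (by omega)
  exact ⟨X, by omega, by omega⟩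

theorem exists_solution_of_dvd_of_sq_le {a b c x y z : ℤ} (ha : 0 < a) (hb : 0 < b) (hc : 0 < c)
    (hne : ¬(x = 0 ∧ y = 0 ∧ z = 0)) (hx : x ^ 2 ≤ b * c) (hy : y ^ 2 < a * c) (hz : z ^ 2 < a * b)
    (hdvd : a * b * c ∣ a * x ^ 2 + b * y ^ 2 - c * z ^ 2) :
    ∃ x y z : ℤ, ¬(x = 0 ∧ y = 0 ∧ z = 0) ∧ a * x ^ 2 + b * y ^ 2 = c * z ^ 2 := by
  obtain ⟨k, hk⟩ := hdvd
  have habc : 0 < a * b * c := by positivity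
  have hax : a * x ^ 2 ≤ a * b * c := by nlinarith
  have hby : b * y ^ 2 < a * b * c := by nlinarith
  have hcz : c * z ^ 2 < a * b * c := by nlinarith
  have hk0 : -1 < k := lt_of_mul_lt_mul_left (by nlinarith [sq_nonneg x, sq_nonneg y]) habc.le
  have hk1 : k < 2 := lt_of_mul_lt_mul_left (by nlinarith [sq_nonneg z]) habc.le
  obtain rfl | rfl : k = 0 ∨ k = 1 := by omega
  · exact ⟨x, y, z, hne, by linarith⟩
  · refine ⟨x * z + b * y, y * z - a * x, z ^ 2 + a * b, fun h => ?_, ?_⟩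
    · nlinarith [h.2.2, sq_nonneg z]
    · linear_combination (z ^ 2 + a * b) * hk

theorem exists_solution_of_dvd_sq_sub {a b c u v w : ℤ} (ha : 0 < a) (hb : 0 < b) (hc : 0 < c)
    (hab : IsCoprime a b) (hbc : IsCoprime b c) (hac : IsCoprime a c)
    (hu : a ∣ u ^ 2 - b * c) (hv : b ∣ v ^ 2 - a * c) (hw : c ∣ w ^ 2 + a * b) :
    ∃ x y z : ℤ, ¬(x = 0 ∧ y = 0 ∧ z = 0) ∧ a * x ^ 2 + b * y ^ 2 = c * z ^ 2 := by
  obtain ⟨X, hX, hX'⟩ := exists_sq_le_lt_sq (n := b * c) (by positivity)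
  obtain ⟨Y, hY, hY'⟩ := exists_sq_lt_le_sq (n := a * c) (by positivity)
  obtain ⟨Z, hZ, hZ'⟩ := exists_sq_lt_le_sq (n := a * b) (by positivity)
  have hvol : a * b * c < (X + 1) * (Y + 1) * (Z + 1) := by
    refine lt_of_pow_lt_pow_left₀ 2 (by positivity) ?_
    calc (a * b * c) ^ 2 = b * c * ((a * c) * (a * b)) := by ring
      _ < ((X : ℤ) + 1) ^ 2 * (((Y : ℤ) + 1) ^ 2 * ((Z : ℤ) + 1) ^ 2) :=
        mul_lt_mul hX' (mul_le_mul hY' hZ' (by positivity) (by positivity)) (by positivity)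
          (by positivity)
      _ = _ := by ring
  obtain ⟨x, y, z, hne, hx, hy, hz, hxa, hyb, hzc⟩ := exists_abs_le_dvd_sub ha hb hc u v w hvol
  refine exists_solution_of_dvd_of_sq_le ha hb hc hne ?_ ?_ ?_
    (mul_mul_dvd_form_of_dvd_sub hab hbc hac hu hv hw hxa hyb hzc)
  · exact (sq_le_sq.mpr (by simpa using hx)).trans hX
  · exact (sq_le_sq.mpr (by simpa using hy)).trans_lt hY
  · exact (sq_le_sq.mpr (by simpa using hz)).trans_lt hZ

theorem legendre_equation_general (a b c : ℤ) (ha : 0 < a) (hb : 0 < b) (hc : 0 < c)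
    (hab : IsCoprime a b) (hbc : IsCoprime b c) (hac : IsCoprime a c)
    (h1 : IsSquare ((b * c : ℤ) : ZMod a.toNat))
    (h2 : IsSquare ((a * c : ℤ) : ZMod b.toNat))
    (h3 : IsSquare ((-(a * b) : ℤ) : ZMod c.toNat)) :
    ∃ x y z : ℤ, ¬(x = 0 ∧ y = 0 ∧ z = 0) ∧ a * x ^ 2 + b * y ^ 2 = c * z ^ 2 := by
  obtain ⟨u, hu⟩ := exists_sq_sub_dvd_of_isSquare ha.le h1
  obtain ⟨v, hv⟩ := exists_sq_sub_dvd_of_isSquare hb.le h2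
  obtain ⟨w, hw⟩ := exists_sq_sub_dvd_of_isSquare hc.le h3
  exact exists_solution_of_dvd_sq_sub ha hb hc hab hbc hac hu hv (by rwa [sub_neg_eq_add] at hw)

/-- Legendre's theorem on the equation `a x² + b y² = c z²`. -/
theorem legendre_equation (a b c : ℤ) (ha : 0 < a) (hb : 0 < b) (hc : 0 < c)
    (hab : IsCoprime a b) (hbc : IsCoprime b c) (hac : IsCoprime a c)
    (sqa : Squarefree a) (sqb : Squarefree b) (sqc : Squarefree c)
    (h1 : IsSquare ((b * c : ℤ) : ZMod a.toNat))
    (h2 : IsSquare ((a * c : ℤ) : ZMod b.toNat))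
    (h3 : IsSquare ((-(a * b) : ℤ) : ZMod c.toNat)) :
    ∃ x y z : ℤ, ¬(x = 0 ∧ y = 0 ∧ z = 0) ∧ a * x ^ 2 + b * y ^ 2 = c * z ^ 2 :=
  legendre_equation_general a b c ha hb hc hab hbc hac h1 h2 h3
end

section
/- Given distinct primes a and A with a ≡ 1 (mod 4) and A ≡ 1 (mod 4), there exists a prime b with b ≡ 3 (mod 4), (b/a) = 1 and (A/b) = -1. -/
/-!
By Dirichlet's theorem there is a prime `b` with `b ≡ 3 (mod 4)`, `b ≡ 1 (mod a)` and `b`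
congruent modulo `A` to a quadratic nonresidue; these residues fit together by the Chinese
remainder theorem. Then `(b/a) = 1`, and since `A ≡ 1 (mod 4)` quadratic reciprocity gives
`(A/b) = (b/A) = -1`.
-/

theorem ZMod.natCast_eq_chineseRemainder_symm_iff {m n : ℕ} (h : m.Coprime n) (k : ℕ)
    (r : ZMod m) (s : ZMod n) :
    (k : ZMod (m * n)) = (chineseRemainder h).symm (r, s) ↔
      (k : ZMod m) = r ∧ (k : ZMod n) = s := by
  rw [RingEquiv.eq_symm_apply, map_natCast, Prod.ext_iff]
  rfl

theorem Nat.exists_prime_natCast_eq_and_natCast_eq {m n : ℕ} [NeZero (m * n)]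
    (h : m.Coprime n) {r : ZMod m} {s : ZMod n} (hr : IsUnit r) (hs : IsUnit s) :
    ∃ p : ℕ, p.Prime ∧ (p : ZMod m) = r ∧ (p : ZMod n) = s := by
  have hunit : IsUnit ((ZMod.chineseRemainder h).symm (r, s)) :=
    (Prod.isUnit_iff.mpr ⟨hr, hs⟩).map _
  obtain ⟨p, -, hp, hpc⟩ := Nat.forall_exists_prime_gt_and_eq_mod hunit 0
  exact ⟨p, hp, (ZMod.natCast_eq_chineseRemainder_symm_iff h p r s).mp hpc⟩

/-- Legendre's first auxiliary lemma: given distinct primes `a ≡ A ≡ 1 (mod 4)`, there is a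
prime `b ≡ 3 (mod 4)` with `(b/a) = 1` and `(A/b) = -1`. -/
theorem legendre_lemma_one (a A : ℕ) [Fact a.Prime] [Fact A.Prime] (hne : a ≠ A)
    (ha : a % 4 = 1) (hA : A % 4 = 1) :
    ∃ b : ℕ, ∃ hb : b.Prime, b % 4 = 3 ∧
      legendreSym a (b : ℤ) = 1 ∧ @legendreSym b ⟨hb⟩ (A : ℤ) = -1 := by
  have hap : a.Prime := Fact.out
  have hAp : A.Prime := Fact.out
  have haA : a.Coprime A := (Nat.coprime_primes hap hAp).mpr hne
  have h4aA : Nat.Coprime 4 (a * A) := by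
    rw [show 4 = 2 ^ 2 by rfl, Nat.coprime_pow_left_iff two_pos, Nat.coprime_mul_iff_right,
      Nat.coprime_two_left, Nat.coprime_two_left, Nat.odd_iff, Nat.odd_iff]
    omega
  obtain ⟨u, hu⟩ := FiniteField.exists_nonsquare (F := ZMod A) (by
    rw [ZMod.ringChar_zmod_n]; omega)
  have hu0 : u ≠ 0 := by rintro rfl; exact hu .zero
  obtain ⟨b, hb, hb4, hbaA⟩ := Nat.exists_prime_natCast_eq_and_natCast_eq h4aA
    (r := 3) (s := (ZMod.chineseRemainder haA).symm (1, u)) (by decide)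
    ((Prod.isUnit_iff.mpr ⟨isUnit_one, hu0.isUnit⟩).map _)
  obtain ⟨hba, hbA⟩ := (ZMod.natCast_eq_chineseRemainder_symm_iff haA b 1 u).mp hbaA
  have hb3 : b % 4 = 3 := by rw [← ZMod.val_natCast, hb4]; rfl
  have : Fact b.Prime := ⟨hb⟩
  refine ⟨b, hb, hb3, ?_, ?_⟩
  · simp [legendreSym, hba]
  · rw [legendreSym.quadratic_reciprocity_one_mod_four hA (by omega),
      legendreSym.eq_neg_one_iff]
    simpa [hbA] using hu
end

section
/- For each prime p with p ≡ 1 (mod 4) there exists a prime q with q ≡ 3 (mod 4) such that (p/q) = -1. -/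
/-!
Pick a quadratic non-residue `c` modulo `p`. By Dirichlet's theorem on primes in arithmetic
progressions, applied modulo `4p` via the Chinese remainder theorem, there is a prime
`q ≡ 3 (mod 4)` with `q ≡ c (mod p)`, so `(q/p) = -1`. Since `p ≡ 1 (mod 4)`, quadratic
reciprocity gives `(p/q) = (q/p)`.
-/

theorem Nat.exists_prime_natCast_eq_and_natCast_eq_s2 {m n : ℕ} [NeZero m] [NeZero n]
    (hmn : m.Coprime n) {a : ZMod m} {b : ZMod n} (ha : IsUnit a) (hb : IsUnit b) :
    ∃ q : ℕ, q.Prime ∧ (q : ZMod m) = a ∧ (q : ZMod n) = b := by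
  let e := ZMod.chineseRemainder hmn
  have hab : IsUnit (e.symm (a, b)) := (Prod.isUnit_iff.mpr ⟨ha, hb⟩).map e.symm
  obtain ⟨q, -, hq, hqab⟩ := Nat.forall_exists_prime_gt_and_eq_mod hab 0
  have hq_pair : (q : ZMod m × ZMod n) = (a, b) := by
    simpa only [map_natCast, RingEquiv.apply_symm_apply] using congrArg e hqab
  rw [Prod.ext_iff, Prod.fst_natCast, Prod.snd_natCast] at hq_pair
  exact ⟨q, hq, hq_pair⟩

/-- Legendre's second auxiliary lemma: for each prime `p ≡ 1 (mod 4)` there is a prime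
`q ≡ 3 (mod 4)` with `(p/q) = -1`. -/
theorem legendre_lemma_two (p : ℕ) (hp : p.Prime) (hp4 : p % 4 = 1) :
    ∃ q : ℕ, ∃ hq : q.Prime, q % 4 = 3 ∧ @legendreSym q ⟨hq⟩ (p : ℤ) = -1 := by
  have := Fact.mk hp
  have hp2 : p ≠ 2 := by omega
  obtain ⟨c, hc⟩ := FiniteField.exists_nonsquare (F := ZMod p) (by rwa [ZMod.ringChar_zmod_n])
  have hc_unit : IsUnit c := isUnit_iff_ne_zero.mpr (by rintro rfl; exact hc IsSquare.zero)
  have h4p : Nat.Coprime 4 p :=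
    Nat.Coprime.pow_left 2 ((Nat.coprime_primes Nat.prime_two hp).mpr hp2.symm)
  obtain ⟨q, hq, hq3, hqc⟩ :=
    Nat.exists_prime_natCast_eq_and_natCast_eq_s2 h4p (a := 3) (by decide) hc_unit
  have hq4 : q % 4 = 3 := by rw [← ZMod.val_natCast, hq3]; rfl
  have := Fact.mk hq
  refine ⟨q, hq, hq4, ?_⟩
  rw [legendreSym.quadratic_reciprocity_one_mod_four hp4 (by omega), legendreSym.eq_neg_one_iff',
    hqc]
  exact hc
end

section
/- For distinct primes q and r with q ≡ 3 (mod 4) and r ≡ 3 (mod 4), there exists a prime p with p ≡ 1 (mod 4) such that (p/q) = -1 and (p/r) = -1. -/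
/-!
By the Chinese remainder theorem, the conditions `p ≡ 1 (mod 4)`, `p ≡ b (mod q)` and
`p ≡ c (mod r)`, with `b` and `c` quadratic nonresidues, define a single invertible residue
class modulo `4qr`, and Dirichlet's theorem provides a prime in it.
-/

namespace ZMod

theorem exists_isUnit_and_natCast_eq_iff {m n : ℕ} (h : m.Coprime n) {a : ZMod m} {b : ZMod n}
    (ha : IsUnit a) (hb : IsUnit b) :
    ∃ c : ZMod (m * n), IsUnit c ∧
      ∀ k : ℕ, (k : ZMod (m * n)) = c ↔ (k : ZMod m) = a ∧ (k : ZMod n) = b := by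
  let e := chineseRemainder h
  refine ⟨e.symm (a, b), (Prod.isUnit_iff.mpr ⟨ha, hb⟩).map e.symm, fun k => ?_⟩
  rw [e.eq_symm_apply, map_natCast, Prod.ext_iff]
  rfl

theorem exists_isUnit_not_isSquare {q : ℕ} [Fact q.Prime] (hq : q ≠ 2) :
    ∃ b : ZMod q, IsUnit b ∧ ¬IsSquare b := by
  obtain ⟨b, hb⟩ := FiniteField.exists_nonsquare (F := ZMod q) (by rwa [ringChar_zmod_n])
  exact ⟨b, isUnit_iff_ne_zero.mpr (by rintro rfl; exact hb ⟨0, by simp⟩), hb⟩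

end ZMod

/-- Legendre's third auxiliary lemma: for distinct primes `q ≡ r ≡ 3 (mod 4)` there is a
prime `p ≡ 1 (mod 4)` with `(p/q) = (p/r) = -1`. -/
theorem legendre_lemma_three (q r : ℕ) [Fact q.Prime] [Fact r.Prime] (hne : q ≠ r)
    (hq : q % 4 = 3) (hr : r % 4 = 3) :
    ∃ p : ℕ, p.Prime ∧ p % 4 = 1 ∧
      legendreSym q (p : ℤ) = -1 ∧ legendreSym r (p : ℤ) = -1 := by
  have hqr : q.Coprime r := (Nat.coprime_primes Fact.out Fact.out).mpr hne
  have h4qr : Nat.Coprime 4 (q * r) := by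
    refine Nat.Coprime.mul_right ?_ ?_ <;> rw [Nat.Coprime, Nat.gcd_rec] <;> simp [hq, hr]
  obtain ⟨b, hb_unit, hb⟩ := ZMod.exists_isUnit_not_isSquare (q := q) (by omega)
  obtain ⟨c, hc_unit, hc⟩ := ZMod.exists_isUnit_not_isSquare (q := r) (by omega)
  obtain ⟨x, hx_unit, hx⟩ := ZMod.exists_isUnit_and_natCast_eq_iff hqr hb_unit hc_unit
  obtain ⟨y, hy_unit, hy⟩ := ZMod.exists_isUnit_and_natCast_eq_iff h4qr isUnit_one hx_unit
  obtain ⟨p, -, hp, hpy⟩ := Nat.forall_exists_prime_gt_and_eq_mod hy_unit 0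
  obtain ⟨hp4, hpx⟩ := (hy p).mp hpy
  obtain ⟨hpb, hpc⟩ := (hx p).mp hpx
  refine ⟨p, hp, ?_, ?_, ?_⟩
  · rwa [← Nat.cast_one, ZMod.natCast_eq_natCast_iff'] at hp4
  · rwa [legendreSym.eq_neg_one_iff', hpb]
  · rwa [legendreSym.eq_neg_one_iff', hpc]
end

section
/- For every prime q with q ≡ 1 (mod 4) there is a prime p with p < q and (q/p) = -1. -/
/-!
There is a quadratic nonresidue `a < q` modulo `q`; as `(-1/q) = 1`, so is `q - a`, and one of
the two is odd. Since the Legendre symbol is multiplicative, some prime factor `p` of this odd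
nonresidue is itself a nonresidue modulo `q`, and `p < q`, `p ≠ 2`. Quadratic reciprocity for
`q ≡ 1 (mod 4)` turns `(p/q) = -1` into `(q/p) = -1`.
-/

theorem Nat.exists_prime_dvd_map_ne_one {M : Type*} [CommMonoid M] (f : ℕ →* M) {m : ℕ}
    (hm : m ≠ 0) (hfm : f m ≠ 1) : ∃ p, p.Prime ∧ p ∣ m ∧ f p ≠ 1 := by
  contrapose! hfm
  rw [← Nat.prod_primeFactorsList hm, map_list_prod]
  exact List.prod_eq_one fun x hx ↦ by
    obtain ⟨p, hp, rfl⟩ := List.mem_map.mp hx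
    exact hfm p (Nat.prime_of_mem_primeFactorsList hp) (Nat.dvd_of_mem_primeFactorsList hp)

namespace legendreSym

variable {q : ℕ} [Fact q.Prime]

theorem exists_prime_dvd_eq_neg_one {m : ℕ} (hm : legendreSym q m = -1) :
    ∃ p, p.Prime ∧ p ∣ m ∧ legendreSym q p = -1 := by
  have hm0 : m ≠ 0 := by rintro rfl; simp [at_zero] at hm
  obtain ⟨p, hp, ⟨k, rfl⟩, hp1⟩ := Nat.exists_prime_dvd_map_ne_one
    ((hom q : ℤ →* ℤ).comp (Nat.castRingHom ℤ : ℕ →* ℤ)) hm0 (by simp [hom, hm])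
  rw [Nat.cast_mul, legendreSym.mul] at hm
  exact ⟨p, hp, dvd_mul_right p k,
    (Int.eq_one_or_neg_one_of_mul_eq_neg_one hm).resolve_left (by simpa [hom] using hp1)⟩

theorem exists_lt_eq_neg_one (hq : q ≠ 2) : ∃ a < q, legendreSym q a = -1 := by
  obtain ⟨a, ha⟩ := FiniteField.exists_nonsquare (F := ZMod q) (by rwa [ZMod.ringChar_zmod_n])
  exact ⟨a.val, a.val_lt, by rwa [eq_neg_one_iff', ZMod.natCast_zmod_val]⟩

theorem sub_eq_of_mod_four_eq_one (hq4 : q % 4 = 1) {a : ℕ} (ha : a ≤ q) :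
    legendreSym q ↑(q - a) = legendreSym q a := by
  rw [legendreSym.mod, Nat.cast_sub ha, Int.sub_emod_left, ← legendreSym.mod, at_neg (by omega),
    ZMod.χ₄_nat_one_mod_four hq4, one_mul]

theorem exists_odd_lt_eq_neg_one (hq4 : q % 4 = 1) :
    ∃ m, Odd m ∧ m < q ∧ legendreSym q m = -1 := by
  obtain ⟨a, haq, ha⟩ := exists_lt_eq_neg_one (q := q) (by omega)
  have ha0 : a ≠ 0 := by rintro rfl; simp [at_zero] at ha
  rcases Nat.even_or_odd a with heven | hodd
  · refine ⟨q - a, ?_, by omega, by rw [sub_eq_of_mod_four_eq_one hq4 haq.le, ha]⟩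
    exact Nat.Odd.sub_even haq.le (Nat.odd_iff.mpr (by omega)) heven
  · exact ⟨a, hodd, haq, ha⟩

end legendreSym

/-- Gauss's auxiliary lemma: for every prime `q ≡ 1 (mod 4)` there is a prime `p < q`
with `(q/p) = -1`. -/
theorem gauss_auxiliary_prime (q : ℕ) (hq : q.Prime) (hq4 : q % 4 = 1) :
    ∃ p : ℕ, ∃ hp : p.Prime, p < q ∧ @legendreSym p ⟨hp⟩ (q : ℤ) = -1 := by
  have := Fact.mk hq
  obtain ⟨m, hm_odd, hmq, hm⟩ := legendreSym.exists_odd_lt_eq_neg_one hq4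
  obtain ⟨p, hp, hpm, hp_nonres⟩ := legendreSym.exists_prime_dvd_eq_neg_one hm
  have := Fact.mk hp
  refine ⟨p, hp, (Nat.le_of_dvd hm_odd.pos hpm).trans_lt hmq, ?_⟩
  rwa [legendreSym.quadratic_reciprocity_one_mod_four hq4 (hm_odd.ne_two_of_dvd_nat hpm)]
end

section
/- Let a, b, c be integers with d = b² - 4ac, and assume there is no integer k with d = -k². Then the set of primes q with q ≡ 3 (mod 4) such that q divides a·n² + b·n + c for some integer n is infinite. -/
/-!
By Dirichlet's theorem and the periodicity of `J(d | ·)` modulo `4|d|`, it suffices to find a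
single `r ≡ 3 (mod 4)` with `J(d | r) = 1`, where `d = b² - 4ac`: for every prime `p ≡ r`
(mod `4|d|`), `d` is then a nonzero square modulo `p`, so `a x² + b x + c` has a root modulo `p`.

Write `|d| = 2^e m` with `m` odd and choose `r` by its residues modulo `8` and modulo `m`.
If `d > 0`, take `r ≡ 7 (mod 8)` and `r ≡ -1 (mod m)`. If `d < 0` and `m` is a square, then `e`
is odd since `d` is not minus a square, and `r ≡ 3 (mod 8)`, `r ≡ 1 (mod m)` works. Otherwise `m`
has a prime factor of odd multiplicity, hence a Jacobi non-residue `v`, and `r ≡ 7 (mod 8)`,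
`r ≡ -v (mod m)` works. In each case quadratic reciprocity evaluates `J(d | r)`.
-/

open NumberTheorySymbols ZMod

theorem ZMod.exists_natCast_eq_and_natCast_eq {m n : ℕ} [NeZero m] [NeZero n] (h : m.Coprime n)
    (a : ZMod m) (b : ZMod n) : ∃ r : ℕ, (r : ZMod m) = a ∧ (r : ZMod n) = b := by
  obtain ⟨r, ha, hb⟩ := Nat.chineseRemainder h a.val b.val
  refine ⟨r, ?_, ?_⟩
  · rw [← ZMod.natCast_zmod_val a, ZMod.natCast_eq_natCast_iff]; exact ha
  · rw [← ZMod.natCast_zmod_val b, ZMod.natCast_eq_natCast_iff]; exact hb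

theorem Nat.exists_prime_odd_factorization_of_not_isSquare {n : ℕ} (hn : n ≠ 0)
    (hsq : ¬IsSquare n) : ∃ p, p.Prime ∧ Odd (n.factorization p) := by
  obtain ⟨a, b, rfl, ha⟩ := Nat.sq_mul_squarefree n
  have ha1 : a ≠ 1 := by rintro rfl; exact hsq ⟨b, by ring⟩
  have hp := Nat.minFac_prime ha1
  refine ⟨a.minFac, hp, ?_⟩
  rw [Nat.factorization_mul (left_ne_zero_of_mul hn) (right_ne_zero_of_mul hn),
    Nat.factorization_pow, Finsupp.add_apply, Finsupp.smul_apply,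
    Nat.factorization_eq_one_of_squarefree ha hp (Nat.minFac_dvd a)]
  exact ⟨_, rfl⟩

theorem jacobiSym.congr_left_of_intCast_eq {a₁ a₂ : ℤ} {b : ℕ} (h : (a₁ : ZMod b) = a₂) :
    J(a₁ | b) = J(a₂ | b) :=
  jacobiSym.mod_left' ((ZMod.intCast_eq_intCast_iff' _ _ _).mp h)

theorem jacobiSym.exists_eq_neg_one_of_not_isSquare {m : ℕ} (hm : Odd m) (hsq : ¬IsSquare m) :
    ∃ v : ℤ, J(v | m) = -1 := by
  obtain ⟨p, hp, k, hk⟩ := Nat.exists_prime_odd_factorization_of_not_isSquare hm.pos.ne' hsq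
  have : Fact p.Prime := ⟨hp⟩
  have hpm : p ∣ m := Nat.dvd_of_factorization_pos (by omega)
  have hp2 : p ≠ 2 := by rintro rfl; exact (Nat.not_even_iff_odd.mpr hm) (even_iff_two_dvd.mpr hpm)
  set w := ordCompl[p] m
  have : NeZero w := ⟨(Nat.ordCompl_pos p hm.pos.ne').ne'⟩
  obtain ⟨z, hz⟩ := FiniteField.exists_nonsquare (F := ZMod p) (by rwa [ZMod.ringChar_zmod_n])
  obtain ⟨v, hvp, hvw⟩ := ZMod.exists_natCast_eq_and_natCast_eq
    (Nat.coprime_ordCompl hp hm.pos.ne') z 1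
  refine ⟨v, ?_⟩
  have hJp : J(v | p) = -1 := by
    rw [ZMod.nonsquare_iff_jacobiSym_eq_neg_one, Int.cast_natCast, hvp]; exact hz
  have hJw : J(v | w) = 1 := by
    rw [jacobiSym.congr_left_of_intCast_eq (a₂ := 1) (by simpa using hvw), jacobiSym.one_left]
  rw [← Nat.ordProj_mul_ordCompl_eq_self m p, jacobiSym.mul_right, jacobiSym.pow_right, hJp, hJw,
    hk, pow_succ, pow_mul]
  norm_num

theorem jacobiSym.two_pow_mul_of_mod_four_eq_three (e : ℕ) {m r : ℕ} (hm : Odd m)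
    (hr : r % 4 = 3) :
    J(2 ^ e * m | r) = χ₈ r ^ e * J(-1 | m) * J(r | m) := by
  have hr' : Odd r := Nat.odd_iff.mpr (by omega)
  rw [jacobiSym.mul_left, jacobiSym.pow_left, jacobiSym.at_two hr',
    jacobiSym.quadratic_reciprocity' hm hr', qrSign, ZMod.χ₄_nat_three_mod_four hr,
    mul_assoc]

theorem jacobiSym.neg_one_mul_self {m : ℕ} : J(-1 | m) * J(-1 | m) = 1 := by
  rw [← sq, jacobiSym.sq_one]; simp

theorem exists_mod_four_eq_three_jacobiSym_eq_one {d : ℤ} (hd : ¬∃ k : ℤ, d = -k ^ 2) :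
    ∃ r : ℕ, r % 4 = 3 ∧ J(d | r) = 1 := by
  have hd0 : d.natAbs ≠ 0 := fun h ↦ hd ⟨0, by simpa using h⟩
  obtain ⟨e, m, hm, hdm⟩ := Nat.exists_eq_two_pow_mul_odd hd0
  have : NeZero m := ⟨hm.pos.ne'⟩
  have hcop : Nat.Coprime 8 m := Nat.Coprime.pow_left 3 (Nat.coprime_two_left.mpr hm)
  have exists_residue (c : ℕ) (u : ℤ) : ∃ r : ℕ, r % 8 = c % 8 ∧ J(r | m) = J(u | m) := by
    obtain ⟨r, hr8, hrm⟩ := ZMod.exists_natCast_eq_and_natCast_eq hcop c u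
    exact ⟨r, (ZMod.natCast_eq_natCast_iff' r c 8).mp hr8,
      jacobiSym.congr_left_of_intCast_eq (by simpa using hrm)⟩
  rcases Int.natAbs_eq d with hd' | hd' <;> rw [hdm] at hd' <;> push_cast at hd'
  · obtain ⟨r, hr8, hrm⟩ := exists_residue 7 (-1)
    refine ⟨r, by omega, ?_⟩
    rw [hd', jacobiSym.two_pow_mul_of_mod_four_eq_three e hm (by omega), hrm,
      χ₈_nat_mod_eight, hr8, mul_assoc, jacobiSym.neg_one_mul_self]
    simp
  by_cases hsq : IsSquare m
  · obtain ⟨t, rfl⟩ := hsq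
    rcases Nat.even_or_odd e with ⟨j, rfl⟩ | he
    · exact absurd ⟨2 ^ j * t, by push_cast [hd']; ring⟩ hd
    obtain ⟨r, hr8, hrm⟩ := exists_residue 3 1
    have : NeZero t := ⟨fun h ↦ by simp [h] at hm⟩
    refine ⟨r, by omega, ?_⟩
    rw [hd', jacobiSym.neg _ (Nat.odd_iff.mpr (by omega)), χ₄_nat_three_mod_four (by omega),
      jacobiSym.two_pow_mul_of_mod_four_eq_three e hm (by omega), hrm, χ₈_nat_mod_eight, hr8,
      jacobiSym.mul_right, jacobiSym.neg_one_mul_self]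
    simp [he.neg_one_pow]
  · obtain ⟨v, hv⟩ := jacobiSym.exists_eq_neg_one_of_not_isSquare hm hsq
    obtain ⟨r, hr8, hrm⟩ := exists_residue 7 (-v)
    refine ⟨r, by omega, ?_⟩
    rw [hd', jacobiSym.neg _ (Nat.odd_iff.mpr (by omega)), χ₄_nat_three_mod_four (by omega),
      jacobiSym.two_pow_mul_of_mod_four_eq_three e hm (by omega), hrm, χ₈_nat_mod_eight, hr8,
      neg_eq_neg_one_mul v, jacobiSym.mul_left, hv]
    simp [jacobiSym.neg_one_mul_self]

theorem infinite_setOf_prime_mod_four_eq_three_jacobiSym_eq_one {d : ℤ} {r : ℕ} (hr : r % 4 = 3)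
    (hJ : J(d | r) = 1) : {p : ℕ | p.Prime ∧ p % 4 = 3 ∧ J(d | p) = 1}.Infinite := by
  have : NeZero r := ⟨by omega⟩
  have hrd : Nat.Coprime r d.natAbs :=
    Nat.Coprime.symm (not_not.mp (jacobiSym.eq_zero_iff_not_coprime.not.mp (hJ ▸ one_ne_zero)))
  have hr4 : Nat.Coprime r 4 := by
    rw [Nat.Coprime, Nat.gcd_comm, Nat.gcd_rec, hr]; rfl
  have hd0 : d.natAbs ≠ 0 := by
    rintro h; rw [h, Nat.coprime_zero_right] at hrd; omega
  refine (Nat.infinite_setOfPred_prime_and_modEq (by positivity) (hr4.mul_right hrd)).mono ?_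
  rintro p ⟨hp, hpr⟩
  have hp4 : p % 4 = 3 := by rw [← hr]; exact hpr.of_mul_right _
  refine ⟨hp, hp4, ?_⟩
  rw [jacobiSym.mod_right d (Nat.odd_iff.mpr (by omega)), hpr,
    ← jacobiSym.mod_right d (Nat.odd_iff.mpr (by omega)), hJ]

theorem exists_quadratic_eq_zero_of_isSquare_discrim {K : Type*} [Field K] [NeZero (2 : K)]
    {a b c : K} (hab : a ≠ 0 ∨ b ≠ 0) (hd : IsSquare (discrim a b c)) :
    ∃ x, a * (x * x) + b * x + c = 0 := by
  rcases eq_or_ne a 0 with rfl | ha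
  · exact ⟨-c / b, by field_simp [hab.resolve_left (not_not.mpr rfl)]; ring⟩
  · exact exists_quadratic_eq_zero ha hd

theorem exists_int_dvd_quadratic_of_jacobiSym_eq_one {p : ℕ} [Fact p.Prime] (hp : p ≠ 2)
    {a b c : ℤ} (hJ : J(b ^ 2 - 4 * a * c | p) = 1) : ∃ n : ℤ, (p : ℤ) ∣ a * n ^ 2 + b * n + c := by
  have : NeZero (2 : ZMod p) := ⟨Ring.two_ne_zero (by rwa [ZMod.ringChar_zmod_n])⟩
  have hdisc : discrim (a : ZMod p) b c = ((b ^ 2 - 4 * a * c : ℤ) : ZMod p) := by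
    push_cast [discrim]; rfl
  have hab : (a : ZMod p) ≠ 0 ∨ (b : ZMod p) ≠ 0 := by
    by_contra! h
    have h0 : ((b ^ 2 - 4 * a * c : ℤ) : ZMod p) = ((0 : ℤ) : ZMod p) := by
      rw [← hdisc, h.1, h.2]; simp [discrim]
    rw [jacobiSym.congr_left_of_intCast_eq h0,
      jacobiSym.zero_left (Fact.out : p.Prime).one_lt] at hJ
    exact zero_ne_one hJ
  obtain ⟨x, hx⟩ := exists_quadratic_eq_zero_of_isSquare_discrim hab
    (hdisc ▸ ZMod.isSquare_of_jacobiSym_eq_one hJ)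
  obtain ⟨n, rfl⟩ := ZMod.intCast_surjective x
  refine ⟨n, (ZMod.intCast_zmod_eq_zero_iff_dvd _ _).mp ?_⟩
  push_cast
  linear_combination hx

/-- Lubelski's proposition: every quadratic polynomial `a x² + b x + c` whose discriminant is
not a negative square has infinitely many prime divisors `q ≡ 3 (mod 4)`. -/
theorem lubelski (a b c : ℤ) (hd : ¬∃ k : ℤ, b ^ 2 - 4 * a * c = -k ^ 2) :
    {q : ℕ | q.Prime ∧ q % 4 = 3 ∧ ∃ n : ℤ, (q : ℤ) ∣ a * n ^ 2 + b * n + c}.Infinite := by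
  obtain ⟨r, hr, hJ⟩ := exists_mod_four_eq_three_jacobiSym_eq_one hd
  refine (infinite_setOf_prime_mod_four_eq_three_jacobiSym_eq_one hr hJ).mono ?_
  rintro p ⟨hp, hp4, hpJ⟩
  have : Fact p.Prime := ⟨hp⟩
  exact ⟨hp, hp4, exists_int_dvd_quadratic_of_jacobiSym_eq_one (by omega) hpJ⟩
end

section
/- If χ is a nontrivial Dirichlet character modulo m, then L(1, χ) ≠ 0, i.e., the value at s = 1 of the Dirichlet L-function of χ is nonzero. -/
/-- Nonvanishing of `L(1, χ)` for a nontrivial Dirichlet character `χ`. -/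
theorem LFunction_one_ne_zero (m : ℕ) [NeZero m] (χ : DirichletCharacter ℂ m) (hχ : χ ≠ 1) :
    DirichletCharacter.LFunction χ 1 ≠ 0 := by
  exact DirichletCharacter.LFunction_apply_one_ne_zero hχ
end

section
/- Let Δ be an integer with Δ ≡ 0 or 1 (mod 4) which is not a perfect square. Then the set of odd primes p not dividing Δ with Jacobi symbol (Δ/p) = 1 is infinite, and the set of odd primes p not dividing Δ with Jacobi symbol (Δ/p) = -1 is infinite. -/
/-!
On odd numbers the symbol `(Δ/·)` is periodic modulo `4|Δ|`, so by Dirichlet's theorem every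
nonzero value it takes at some odd `b` is taken at infinitely many primes. The value `1` is
taken at `b = 1`. For `-1`: as `Δ` is not a square, either an odd prime `q` divides `Δ` exactly
to an odd power `v`, and then `b ≡ 1 (mod 4Δ/q^v)` with `b` a non-residue modulo `q` works by
reciprocity; or `Δ = ±2^k t²` with `t` odd (and `k` odd when the sign is `+`), and then the
supplementary laws give a class of `b` modulo 8 that works.
-/

theorem isSquare_of_forall_even_factorization {n : ℕ} (hn : n ≠ 0)
    (h : ∀ p, Even (n.factorization p)) : IsSquare n := by
  refine ⟨n.factorization.prod fun p e => p ^ (e / 2), ?_⟩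
  conv_lhs => rw [← Nat.prod_factorization_pow_eq_self hn]
  rw [Finsupp.prod, Finsupp.prod, ← Finset.prod_mul_distrib]
  refine Finset.prod_congr rfl fun p _ => ?_
  rw [← pow_add, ← two_mul, Nat.two_mul_div_two_of_even (h p)]

theorem exists_prime_ne_two_odd_factorization_of_not_isSquare {n : ℕ} (hn : Odd n)
    (hsq : ¬IsSquare n) : ∃ q, q.Prime ∧ q ≠ 2 ∧ Odd (n.factorization q) := by
  obtain ⟨q, hqn⟩ : ∃ q, ¬Even (n.factorization q) := by
    by_contra! h
    exact hsq (isSquare_of_forall_even_factorization hn.pos.ne' h)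
  refine ⟨q, Nat.prime_of_mem_primeFactors (Finsupp.mem_support_iff.mpr
    fun h => hqn (h ▸ Even.zero)), ?_, Nat.not_even_iff_odd.mp hqn⟩
  rintro rfl
  exact hqn (Nat.factorization_eq_zero_of_not_dvd hn.not_two_dvd_nat ▸ Even.zero)

theorem infinite_setOf_prime_jacobiSym_eq {a : ℤ} (ha : a ≠ 0) {b : ℕ} (hb : Odd b)
    (hab : jacobiSym a b ≠ 0) :
    {p : ℕ | p.Prime ∧ p ≠ 2 ∧ ¬(p : ℤ) ∣ a ∧ jacobiSym a p = jacobiSym a b}.Infinite := by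
  have : NeZero (4 * a.natAbs) := ⟨by positivity⟩
  have hcop : b.Coprime (4 * a.natAbs) :=
    (Nat.Coprime.pow_right 2 (Nat.coprime_two_right.mpr hb)).mul_right
      (Nat.coprime_comm.mp (by_contra fun h => hab (jacobiSym.eq_zero_iff.mpr ⟨hb.pos.ne', h⟩)))
  refine (Nat.infinite_setOfPred_prime_and_eq_mod
    ((ZMod.isUnit_iff_coprime b _).mpr hcop)).mono ?_
  rintro p ⟨hp, hpb⟩
  have hmod : p ≡ b [MOD 4 * a.natAbs] := (ZMod.natCast_eq_natCast_iff _ _ _).mp hpb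
  have hp_odd : Odd p := Nat.odd_iff.mpr <|
    Eq.trans (hmod.of_dvd (dvd_mul_of_dvd_left (by norm_num : 2 ∣ 4) _)) (Nat.odd_iff.mp hb)
  have hJ : jacobiSym a p = jacobiSym a b := by
    rw [jacobiSym.mod_right a hp_odd, jacobiSym.mod_right a hb, hmod]
  refine ⟨hp, by rintro rfl; norm_num at hp_odd, fun hpa => hab ?_, hJ⟩
  rw [← hJ, jacobiSym.mod_left, Int.emod_eq_zero_of_dvd hpa, jacobiSym.zero_left hp.one_lt]

theorem exists_jacobiSym_prime_pow_mul_eq_neg_one {q : ℕ} (hq : q.Prime) (hq2 : q ≠ 2)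
    {v : ℕ} (hv : Odd v) {c : ℤ} (hqc : ¬(q : ℤ) ∣ c) :
    ∃ b : ℕ, Odd b ∧ jacobiSym ((q : ℤ) ^ v * c) b = -1 := by
  have : Fact q.Prime := ⟨hq⟩
  obtain ⟨u, hu⟩ := quadraticChar_exists_neg_one (F := ZMod q) (by rwa [ZMod.ringChar_zmod_n])
  have hcop : (4 * c.natAbs).Coprime q := by
    refine Nat.Coprime.mul_left (show Nat.Coprime (2 ^ 2) q from .pow_left 2 ?_) ?_
    · exact (Nat.coprime_primes Nat.prime_two hq).mpr hq2.symm
    · exact ((Nat.Prime.coprime_iff_not_dvd hq).mpr (by rwa [← Int.natCast_dvd])).symm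
  -- `b ≡ 1 (mod 4c)` kills `(c/b)` and lets reciprocity turn `(q/b)` into `(b/q) = (u/q)`.
  obtain ⟨b, hb1, hbu⟩ := Nat.chineseRemainder hcop 1 u.val
  have h4c : 1 < 4 * c.natAbs := by
    have : c.natAbs ≠ 0 := by rintro h; simp [Int.natAbs_eq_zero.mp h] at hqc
    omega
  have hb4 : b % 4 = 1 := hb1.of_dvd (dvd_mul_right 4 c.natAbs)
  have hb : Odd b := Nat.odd_iff.mpr (by omega)
  have hJc : jacobiSym c b = 1 := by
    rw [jacobiSym.mod_right c hb, hb1, Nat.mod_eq_of_lt h4c, jacobiSym.one_right]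
  have hJq : jacobiSym q b = -1 := by
    rw [jacobiSym.quadratic_reciprocity_one_mod_four' (hq.odd_of_ne_two hq2) hb4,
      ← jacobiSym.legendreSym.to_jacobiSym, legendreSym, Int.cast_natCast,
      (ZMod.natCast_eq_natCast_iff _ _ _).mpr hbu, ZMod.natCast_zmod_val, hu]
  refine ⟨b, hb, ?_⟩
  rw [jacobiSym.mul_left, jacobiSym.pow_left, hJq, hJc, hv.neg_one_pow, mul_one]

theorem exists_modEq_eight_jacobiSym_mul_sq {r t : ℕ} (ht : Odd t) (a : ℤ) :
    ∃ b : ℕ, b ≡ r [MOD 8] ∧ jacobiSym (a * (t : ℤ) ^ 2) b = jacobiSym a b := by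
  have h8t : Nat.Coprime 8 t := Nat.Coprime.pow_left 3 (Nat.coprime_two_left.mpr ht)
  obtain ⟨b, hb8, hbt⟩ := Nat.chineseRemainder h8t r 1
  refine ⟨b, hb8, ?_⟩
  rw [jacobiSym.mul_left, jacobiSym.sq_one' (Nat.coprime_of_mul_modEq_one 1 ?_).symm, mul_one]
  simpa using hbt

theorem exists_jacobiSym_two_pow_mul_sq_eq_neg_one {k : ℕ} (hk : Odd k) {t : ℕ} (ht : Odd t) :
    ∃ b : ℕ, Odd b ∧ jacobiSym (2 ^ k * (t : ℤ) ^ 2) b = -1 := by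
  obtain ⟨b, hb8, hJ⟩ := exists_modEq_eight_jacobiSym_mul_sq (r := 5) ht (2 ^ k)
  have hb : Odd b := Nat.odd_iff.mpr (hb8.of_dvd (by norm_num : 2 ∣ 8))
  refine ⟨b, hb, ?_⟩
  rw [hJ, jacobiSym.pow_left, jacobiSym.at_two hb, ZMod.χ₈_nat_mod_eight,
    show b % 8 = 5 from hb8]
  exact hk.neg_one_pow

theorem exists_jacobiSym_neg_two_pow_mul_sq_eq_neg_one (k : ℕ) {t : ℕ} (ht : Odd t) :
    ∃ b : ℕ, Odd b ∧ jacobiSym (-(2 ^ k * (t : ℤ) ^ 2)) b = -1 := by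
  obtain ⟨b, hb8, hJ⟩ := exists_modEq_eight_jacobiSym_mul_sq (r := 7) ht (-2 ^ k)
  have hb : Odd b := Nat.odd_iff.mpr (hb8.of_dvd (by norm_num : 2 ∣ 8))
  refine ⟨b, hb, ?_⟩
  rw [← neg_mul, hJ, neg_eq_neg_one_mul, jacobiSym.mul_left, jacobiSym.pow_left,
    jacobiSym.at_neg_one hb, jacobiSym.at_two hb, ZMod.χ₄_nat_mod_four, ZMod.χ₈_nat_mod_eight,
    show b % 8 = 7 from hb8, show b % 4 = 3 from hb8.of_dvd (by norm_num : 4 ∣ 8)]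
  simp

theorem exists_odd_jacobiSym_eq_neg_one {a : ℤ} (ha : ¬IsSquare a) :
    ∃ b : ℕ, Odd b ∧ jacobiSym a b = -1 := by
  have ha0 : a.natAbs ≠ 0 := by rintro h; exact ha (Int.natAbs_eq_zero.mp h ▸ IsSquare.zero)
  obtain ⟨k, n, hn, hkn⟩ := Nat.exists_eq_two_pow_mul_odd ha0
  by_cases hsq : IsSquare n
  · obtain ⟨t, rfl⟩ := hsq
    have ht : Odd t := Nat.odd_mul.mp hn |>.1
    have hkt : (a.natAbs : ℤ) = 2 ^ k * (t : ℤ) ^ 2 := by rw [hkn]; push_cast; ring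
    rcases Int.natAbs_eq a with hpos | hneg
    · have hk : Odd k := by
        refine Nat.not_even_iff_odd.mp fun ⟨j, hj⟩ => ha ⟨2 ^ j * t, ?_⟩
        rw [hpos, hkt, hj]; ring
      rw [hpos, hkt]
      exact exists_jacobiSym_two_pow_mul_sq_eq_neg_one hk ht
    · rw [hneg, hkt]
      exact exists_jacobiSym_neg_two_pow_mul_sq_eq_neg_one k ht
  · obtain ⟨q, hq, hq2, hv⟩ := exists_prime_ne_two_odd_factorization_of_not_isSquare hn hsq
    set v := n.factorization q
    have hc : ¬(q : ℤ) ∣ a.sign * (2 ^ k * (n / q ^ v) : ℕ) := by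
      rw [Int.natCast_dvd, Int.natAbs_mul, Int.natAbs_sign_of_ne_zero (Int.natAbs_ne_zero.mp ha0),
        Int.natAbs_natCast, one_mul, hq.dvd_mul, not_or]
      refine ⟨fun h => hq2 ?_, Nat.not_dvd_ordCompl hq hn.pos.ne'⟩
      exact (Nat.prime_dvd_prime_iff_eq hq Nat.prime_two).mp (hq.dvd_of_dvd_pow h)
    obtain ⟨b, hb, hJ⟩ := exists_jacobiSym_prime_pow_mul_eq_neg_one hq hq2 hv hc
    refine ⟨b, hb, ?_⟩
    convert hJ using 2
    conv_lhs => rw [← Int.sign_mul_natAbs a, hkn, ← Nat.ordProj_mul_ordCompl_eq_self n q]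
    push_cast
    ring

theorem infinite_primes_jacobiSym_general (Δ : ℤ) (hsq : ¬IsSquare Δ) :
    {p : ℕ | p.Prime ∧ p ≠ 2 ∧ ¬((p : ℤ) ∣ Δ) ∧ jacobiSym Δ p = 1}.Infinite ∧
    {p : ℕ | p.Prime ∧ p ≠ 2 ∧ ¬((p : ℤ) ∣ Δ) ∧ jacobiSym Δ p = -1}.Infinite := by
  have hΔ : Δ ≠ 0 := by rintro rfl; exact hsq IsSquare.zero
  obtain ⟨b, hb, hJ⟩ := exists_odd_jacobiSym_eq_neg_one hsq
  constructor
  · simpa only [jacobiSym.one_right] using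
      infinite_setOf_prime_jacobiSym_eq hΔ odd_one (by simp [jacobiSym.one_right])
  · simpa only [hJ] using infinite_setOf_prime_jacobiSym_eq hΔ hb (by simp [hJ])

/-- For a quadratic discriminant `Δ` (that is, `Δ ≡ 0, 1 (mod 4)` and `Δ` is not a square),
there are infinitely many odd primes `p ∤ Δ` with `(Δ/p) = 1`, and infinitely many with
`(Δ/p) = -1`. -/
theorem infinite_primes_jacobiSym (Δ : ℤ) (h4 : Δ % 4 = 0 ∨ Δ % 4 = 1) (hsq : ¬IsSquare Δ) :
    {p : ℕ | p.Prime ∧ p ≠ 2 ∧ ¬((p : ℤ) ∣ Δ) ∧ jacobiSym Δ p = 1}.Infinite ∧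
    {p : ℕ | p.Prime ∧ p ≠ 2 ∧ ¬((p : ℤ) ∣ Δ) ∧ jacobiSym Δ p = -1}.Infinite :=
  infinite_primes_jacobiSym_general Δ hsq
end

section
/- Let p ≡ 3 (mod 4) and q ≡ 1 (mod 4) be distinct prime numbers. Then there exists a prime p' with p' ≡ 3 (mod 4) such that (p'/p) = -1 and (p'/q) = -1. -/
/-- Kummer's first auxiliary lemma: for distinct primes `p ≡ 3 (mod 4)` and `q ≡ 1 (mod 4)`,
there is a prime `p' ≡ 3 (mod 4)` with `(p'/p) = (p'/q) = -1`. -/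
theorem kummer_lemma_one (p q : ℕ) [Fact p.Prime] [Fact q.Prime] (hne : p ≠ q)
    (hp : p % 4 = 3) (hq : q % 4 = 1) :
    ∃ p' : ℕ, p'.Prime ∧ p' % 4 = 3 ∧
      legendreSym p (p' : ℤ) = -1 ∧ legendreSym q (p' : ℤ) = -1 := by
  have hpp : p.Prime := Fact.out
  have hqp : q.Prime := Fact.out
  have hp2 : p ≠ 2 := by omega
  have hq2 : q ≠ 2 := by omega
  -- nonsquares mod p and mod q
  obtain ⟨x, hx⟩ := FiniteField.exists_nonsquare (F := ZMod p)
    (by rw [ZMod.ringChar_zmod_n]; exact hp2)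
  obtain ⟨y, hy⟩ := FiniteField.exists_nonsquare (F := ZMod q)
    (by rw [ZMod.ringChar_zmod_n]; exact hq2)
  have hx0 : x ≠ 0 := fun h => hx (h ▸ ⟨0, by simp⟩)
  have hy0 : y ≠ 0 := fun h => hy (h ▸ ⟨0, by simp⟩)
  have hxv : ((x.val : ℕ) : ZMod p) = x := by simp
  have hyv : ((y.val : ℕ) : ZMod q) = y := by simp
  -- coprimalities of the moduli
  have hc2p : Nat.Coprime 2 p := (Nat.coprime_primes Nat.prime_two hpp).2 (Ne.symm hp2)
  have hc2q : Nat.Coprime 2 q := (Nat.coprime_primes Nat.prime_two hqp).2 (Ne.symm hq2)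
  have hcpq : Nat.Coprime p q := (Nat.coprime_primes hpp hqp).2 hne
  have hc4p : Nat.Coprime 4 p := by
    have := Nat.Coprime.pow_left 2 hc2p; norm_num at this; exact this
  have hc4q : Nat.Coprime 4 q := by
    have := Nat.Coprime.pow_left 2 hc2q; norm_num at this; exact this
  have hc4pq : Nat.Coprime (4 * p) q := Nat.Coprime.mul hc4q hcpq
  -- construct the residue class by CRT
  obtain ⟨c₁, hc₁4, hc₁p⟩ := Nat.chineseRemainder hc4p 3 x.val
  obtain ⟨c, hcc₁, hcq⟩ := Nat.chineseRemainder hc4pq c₁ y.val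
  have hc4 : c ≡ 3 [MOD 4] := (Nat.ModEq.of_dvd ⟨p, rfl⟩ hcc₁).trans hc₁4
  have hcp : c ≡ x.val [MOD p] := (Nat.ModEq.of_dvd ⟨4, by ring⟩ hcc₁).trans hc₁p
  have hcpz : ((c : ℕ) : ZMod p) = x := by
    rw [(ZMod.natCast_eq_natCast_iff _ _ _).mpr hcp]; exact hxv
  have hcqz : ((c : ℕ) : ZMod q) = y := by
    rw [(ZMod.natCast_eq_natCast_iff _ _ _).mpr hcq]; exact hyv
  -- c is a unit mod 4*p*q
  haveI : NeZero (4 * p * q) := ⟨Nat.mul_ne_zero (Nat.mul_ne_zero (by norm_num) hpp.pos.ne') hqp.pos.ne'⟩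
  have hcp' : Nat.Coprime c p :=
    Nat.Coprime.symm ((Nat.Prime.coprime_iff_not_dvd hpp).mpr
      (fun h => hx0 (by rw [← hcpz, (ZMod.natCast_eq_zero_iff c p).mpr h])))
  have hcq' : Nat.Coprime c q :=
    Nat.Coprime.symm ((Nat.Prime.coprime_iff_not_dvd hqp).mpr
      (fun h => hy0 (by rw [← hcqz, (ZMod.natCast_eq_zero_iff c q).mpr h])))
  have hcm4 : c % 4 = 3 := by simpa [Nat.ModEq] using hc4
  have hc2 : Nat.Coprime c 2 :=
    Nat.Coprime.symm ((Nat.Prime.coprime_iff_not_dvd Nat.prime_two).mpr (by omega))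
  have hc4' : Nat.Coprime c 4 := by
    have := Nat.Coprime.pow_right 2 hc2; norm_num at this; exact this
  have hunit : IsUnit ((c : ℕ) : ZMod (4 * p * q)) := by
    rw [ZMod.isUnit_iff_coprime]
    exact (hc4'.mul_right hcp').mul_right hcq'
  -- Dirichlet's theorem
  obtain ⟨p', -, hp'prime, hp'mod⟩ :=
    Nat.forall_exists_prime_gt_and_eq_mod hunit 1
  have hmod : p' ≡ c [MOD 4 * p * q] := (ZMod.natCast_eq_natCast_iff _ _ _).mp hp'mod
  have h4 : p' ≡ c [MOD 4] := Nat.ModEq.of_dvd ⟨p * q, by ring⟩ hmod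
  have hP : ((p' : ℕ) : ZMod p) = x := by
    rw [(ZMod.natCast_eq_natCast_iff _ _ _).mpr
      (Nat.ModEq.of_dvd ⟨4 * q, by ring⟩ hmod)]
    exact hcpz
  have hQ : ((p' : ℕ) : ZMod q) = y := by
    rw [(ZMod.natCast_eq_natCast_iff _ _ _).mpr
      (Nat.ModEq.of_dvd ⟨4 * p, by ring⟩ hmod)]
    exact hcqz
  refine ⟨p', hp'prime, ?_, ?_, ?_⟩
  · have : c % 4 = 3 := by simpa [Nat.ModEq] using hc4
    have h4' := h4; simp [Nat.ModEq] at h4'; omega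
  · rw [legendreSym.eq_neg_one_iff' (p := p)]
    rw [hP]; exact hx
  · rw [legendreSym.eq_neg_one_iff' (p := q)]
    rw [hQ]; exact hy
end

section
/- Let L be a number field with ring of integers 𝒪. Then the set of maximal ideals 𝔭 of 𝒪 whose absolute norm is a prime number (i.e., prime ideals of inertia degree 1 over ℚ) is infinite. -/
/-!
Let `θ ∈ 𝓞 L` be a primitive element and `f` its minimal polynomial over `ℤ`. Schur's argument
shows that infinitely many primes `q` divide a value `f(a)`. The conductor of `ℤ[θ]` contains
`f'(θ) ≠ 0`, so only finitely many `q` divide the exponent of `θ`; for the others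
Kummer–Dedekind gives `𝓞 L / q ≃ 𝔽_q[X] / (f mod q)`, and evaluation at `a` maps this onto
`𝔽_q`. Its kernel is a maximal ideal of norm `q`.
-/

open Polynomial NumberField IntermediateField

namespace Polynomial

theorem finite_setOf_abs_eval_le {f : ℤ[X]} (hf : 0 < f.natDegree) (B : ℤ) :
    {y : ℤ | |f.eval y| ≤ B}.Finite := by
  have hfib (v : ℤ) : ((fun y => f.eval y) ⁻¹' {v}).Finite := by
    refine (finite_setOfPred_isRoot (p := f - C v) fun h => ?_).subset fun y hy => ?_
    · rw [sub_eq_zero.mp h, natDegree_C] at hf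
      exact hf.ne rfl
    · simpa [sub_eq_zero] using hy
  exact ((Set.finite_Icc (-B) B).preimage' fun v _ => hfib v).subset fun y hy => abs_le.mp hy

theorem exists_eval_add_eval_mul_eq {R : Type*} [CommRing R] (f : R[X]) (b m : R) :
    ∃ s, f.eval (b + f.eval b * m) = f.eval b * (1 + m * s) := by
  obtain ⟨s, hs⟩ := sub_dvd_eval_sub (b + f.eval b * m) b f
  exact ⟨s, by linear_combination hs⟩

theorem exists_prime_gt_dvd_eval {f : ℤ[X]} (hf : 0 < f.natDegree) (n : ℕ) :
    ∃ q : ℕ, n < q ∧ q.Prime ∧ ∃ a : ℤ, (q : ℤ) ∣ f.eval a := by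
  obtain ⟨b, hb⟩ :=
    (finite_setOfPred_isRoot (ne_zero_of_natDegree_gt hf)).infinite_compl.nonempty
  set c := f.eval b
  have hc : c ≠ 0 := hb
  have hM : c * n.factorial ≠ 0 := mul_ne_zero hc (by exact_mod_cast n.factorial_ne_zero)
  obtain ⟨t, ht⟩ := ((finite_setOf_abs_eval_le hf |c|).preimage
    (fun _ _ _ _ h => mul_left_cancel₀ hM (add_left_cancel h) :
      Set.InjOn (fun t => b + c * n.factorial * t) _)).infinite_compl.nonempty
  -- `f (b + c n! t) = c (1 + n! t s)`, and no prime `≤ n` divides the second factor.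
  obtain ⟨s, hs⟩ := f.exists_eval_add_eval_mul_eq b (n.factorial * t)
  set w := 1 + n.factorial * t * s
  have hw : 1 < |w| := by
    simp only [Set.mem_compl_iff, Set.mem_preimage, Set.mem_ofPred_eq, not_le, mul_assoc] at ht
    rw [hs, abs_mul] at ht
    exact (lt_mul_iff_one_lt_right (abs_pos.mpr hc)).mp ht
  rw [Int.abs_eq_natAbs, Nat.one_lt_cast] at hw
  obtain ⟨q, hq, hqw⟩ := Nat.exists_prime_and_dvd hw.ne'
  have hqw : (q : ℤ) ∣ w := Int.natCast_dvd.mpr hqw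
  refine ⟨q, ?_, hq, _, hs ▸ hqw.mul_left c⟩
  by_contra! hqn
  have hq1 : (q : ℤ) ∣ 1 := by
    have : (q : ℤ) ∣ n.factorial * t * s :=
      ((Int.natCast_dvd_natCast.mpr (Nat.dvd_factorial hq.pos hqn)).mul_right t).mul_right s
    simpa [w] using (Int.dvd_add_left this).mp hqw
  exact hq.one_lt.ne' (by exact_mod_cast Int.eq_one_of_dvd_one (by positivity) hq1)

end Polynomial

theorem IntermediateField.adjoin_simple_smul {F E : Type*} [Field F] [Field E] [Algebra F E]
    {c : F} (hc : c ≠ 0) (γ : E) : F⟮c • γ⟯ = F⟮γ⟯ := by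
  refine le_antisymm (adjoin_simple_le_iff.mpr (smul_mem _ (mem_adjoin_simple_self F γ))) ?_
  refine adjoin_simple_le_iff.mpr ?_
  have := smul_mem F⟮c • γ⟯ (mem_adjoin_simple_self F (c • γ)) (x := c⁻¹)
  rwa [inv_smul_smul₀ hc] at this

namespace NumberField

variable {K : Type*} [Field K] [NumberField K]

variable (K) in
theorem exists_ringOfIntegers_primitive_element : ∃ θ : 𝓞 K, ℚ⟮(θ : K)⟯ = ⊤ := by
  obtain ⟨γ, hγ⟩ := Field.exists_primitive_element ℚ K
  obtain ⟨y, hy, hint⟩ := ((IsFractionRing.isAlgebraic_iff ℤ ℚ K).mpr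
    (Algebra.IsAlgebraic.isAlgebraic γ)).exists_integral_multiple
  refine ⟨⟨y • γ, hint⟩, ?_⟩
  change ℚ⟮y • γ⟯ = ⊤
  rw [← Int.cast_smul_eq_zsmul ℚ,
    IntermediateField.adjoin_simple_smul (Int.cast_ne_zero.mpr hy), hγ]

end NumberField

namespace RingOfIntegers

variable {K : Type*} [Field K] [NumberField K]

theorem aeval_derivative_minpoly_ne_zero (θ : 𝓞 K) :
    aeval θ (derivative (minpoly ℤ θ)) ≠ 0 := by
  have hsep := (Algebra.IsSeparable.isSeparable ℚ (θ : K)).aeval_derivative_ne_zero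
    (minpoly.aeval ℚ (θ : K))
  rwa [minpoly.isIntegrallyClosed_eq_field_fractions ℚ K θ.isIntegral, derivative_map,
    aeval_map_algebraMap, aeval_algebraMap_apply, ne_eq, map_eq_zero_iff _
    (FaithfulSMul.algebraMap_injective _ _)] at hsep

theorem aeval_derivative_minpoly_mem_conductor {θ : 𝓞 K} (hθ : ℚ⟮(θ : K)⟯ = ⊤) :
    aeval θ (derivative (minpoly ℤ θ)) ∈ conductor ℤ θ := by
  have hadj := Algebra.adjoin_eq_top_of_primitive_element (Algebra.IsAlgebraic.isAlgebraic _) hθ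
  have h := Ideal.mem_span_singleton_self (aeval θ (derivative (minpoly ℤ θ)))
  rw [← conductor_mul_differentIdeal ℤ ℚ K θ hadj] at h
  exact Ideal.mul_le_left h

theorem exponent_ne_zero {θ : 𝓞 K} (hθ : ℚ⟮(θ : K)⟯ = ⊤) : exponent θ ≠ 0 := by
  rw [exponent, Ne, Ideal.absNorm_eq_zero_iff]
  exact Ideal.comap_ne_bot_of_integral_mem (aeval_derivative_minpoly_ne_zero θ)
    (aeval_derivative_minpoly_mem_conductor hθ) (RingOfIntegers.isIntegral _)

theorem exists_isMaximal_absNorm_eq_of_dvd_eval {θ : 𝓞 K} {p : ℕ} [Fact p.Prime]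
    (hp : ¬ p ∣ exponent θ) {a : ℤ} (ha : (p : ℤ) ∣ (minpoly ℤ θ).eval a) :
    ∃ 𝔭 : Ideal (𝓞 K), 𝔭.IsMaximal ∧ Ideal.absNorm 𝔭 = p := by
  let evalAt : (ZMod p)[X] ⧸ Ideal.span {(minpoly ℤ θ).map (Int.castRingHom (ZMod p))} →+*
      ZMod p :=
    Ideal.Quotient.lift _ (evalRingHom (a : ZMod p)) fun g hg => by
      obtain ⟨h, rfl⟩ := Ideal.mem_span_singleton'.mp hg
      rw [map_mul, coe_evalRingHom, eval_intCast_map, Int.cast_id, eq_intCast,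
        (ZMod.intCast_zmod_eq_zero_iff_dvd _ _).mpr ha, mul_zero]
  let Φ : 𝓞 K →+* ZMod p :=
    (evalAt.comp (ZModXQuotSpanEquivQuotSpan hp).symm.toRingHom).comp (Ideal.Quotient.mk _)
  have hΦ : Function.Surjective Φ := ZMod.ringHom_surjective Φ
  refine ⟨RingHom.ker Φ, RingHom.ker_isMaximal_of_surjective Φ hΦ, ?_⟩
  rw [Ideal.absNorm_apply, Submodule.cardQuot_apply,
    Nat.card_congr (RingHom.quotientKerEquivOfSurjective hΦ).toEquiv, Nat.card_zmod]

end RingOfIntegers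

open RingOfIntegers

/-- Kronecker: every number field has infinitely many prime ideals of inertia degree one. -/
theorem kronecker_degree_one_primes (L : Type*) [Field L] [NumberField L] :
    {𝔭 : Ideal (𝓞 L) | 𝔭.IsMaximal ∧ (Ideal.absNorm 𝔭).Prime}.Infinite := by
  obtain ⟨θ, hθ⟩ := exists_ringOfIntegers_primitive_element L
  refine Set.Infinite.of_image Ideal.absNorm (Set.infinite_of_forall_exists_gt fun n => ?_)
  obtain ⟨q, hq_gt, hq, a, ha⟩ :=
    exists_prime_gt_dvd_eval (minpoly.natDegree_pos θ.isIntegral) (max n (exponent θ))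
  have : Fact q.Prime := ⟨hq⟩
  have hq_exp : ¬ q ∣ exponent θ := Nat.not_dvd_of_pos_of_lt
    (Nat.pos_of_ne_zero (exponent_ne_zero hθ)) (lt_of_le_of_lt (le_max_right _ _) hq_gt)
  obtain ⟨𝔭, h𝔭, hnorm⟩ := exists_isMaximal_absNorm_eq_of_dvd_eval hq_exp ha
  exact ⟨q, ⟨𝔭, ⟨h𝔭, hnorm ▸ hq⟩, hnorm⟩, lt_of_le_of_lt (le_max_left _ _) hq_gt⟩
end

section
/- Let p₁ be a positive odd prime and let p₂ be an integer which is either -1 or a positive prime different from p₁. Then there exist infinitely many primes q with (p₁/q) = -1 and (p₂/q) = -1. -/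
/-!
Every prime `q ≡ 3 (mod 8)` has `(-1/q) = (2/q) = -1`, and for such `q` quadratic reciprocity
gives `(p/q) = ±(q/p)` for an odd prime `p`, with a sign depending only on `p`; so `(p/q) = -1`
once `q` lies in a suitable unit residue class modulo `p`. By the Chinese remainder theorem all
these congruence conditions on `q` cut out a single unit residue class modulo `8 p₁ p₂` (or
`8 p₁`), which contains infinitely many primes by Dirichlet's theorem.
-/

theorem Nat.Prime.coprime_eight {p : ℕ} (hp : p.Prime) (hp2 : p ≠ 2) : Nat.Coprime 8 p :=
  (Nat.coprime_two_left.mpr (hp.odd_of_ne_two hp2)).pow_left 3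

theorem ZMod.exists_isUnit_natCast_eq_and_eq {m n : ℕ} (h : m.Coprime n) {a : ZMod m}
    {b : ZMod n} (ha : IsUnit a) (hb : IsUnit b) :
    ∃ c : ZMod (m * n), IsUnit c ∧
      ∀ x : ℕ, (x : ZMod (m * n)) = c → (x : ZMod m) = a ∧ (x : ZMod n) = b := by
  let e := ZMod.chineseRemainder h
  refine ⟨e.symm (a, b), (Prod.isUnit_iff.mpr ⟨ha, hb⟩).map e.symm, fun x hx => ?_⟩
  have hex : e x = (a, b) := by rw [hx, e.apply_symm_apply]
  rwa [map_natCast, Prod.ext_iff, Prod.fst_natCast, Prod.snd_natCast] at hex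

theorem exists_isUnit_legendreSym_eq_neg_one {p : ℕ} (hp : p.Prime) (hp2 : p ≠ 2) :
    ∃ b : ZMod p, IsUnit b ∧ ∀ q : ℕ, ∀ hq : q.Prime, q % 4 = 3 → (q : ZMod p) = b →
      @legendreSym q ⟨hq⟩ p = -1 := by
  have : Fact p.Prime := ⟨hp⟩
  rcases Nat.odd_mod_four_iff.mp (Nat.odd_iff.mp (hp.odd_of_ne_two hp2)) with hp1 | hp3
  · obtain ⟨b, hb⟩ := quadraticChar_exists_neg_one (F := ZMod p) (by rwa [ZMod.ringChar_zmod_n])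
    refine ⟨b, Ne.isUnit (by rintro rfl; simp at hb), fun q hq hq3 hqb => ?_⟩
    have : Fact q.Prime := ⟨hq⟩
    rw [legendreSym.quadratic_reciprocity_one_mod_four hp1 (by omega), legendreSym,
      Int.cast_natCast, hqb, hb]
  · refine ⟨1, isUnit_one, fun q hq hq3 hqb => ?_⟩
    have : Fact q.Prime := ⟨hq⟩
    rw [legendreSym.quadratic_reciprocity_three_mod_four hp3 hq3, legendreSym, Int.cast_natCast,
      hqb, map_one]

theorem exists_coprime_residue_legendreSym_eq_neg_one {a : ℤ} {n : ℕ} (hn : n.Prime)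
    (ha : a = -1 ∨ (0 < a ∧ Prime a ∧ a ≠ n)) :
    ∃ m : ℕ, (8 * n).Coprime m ∧ ∃ b : ZMod m, IsUnit b ∧
      ∀ q : ℕ, ∀ hq : q.Prime, q % 8 = 3 → (q : ZMod m) = b → @legendreSym q ⟨hq⟩ a = -1 := by
  rcases ha with rfl | ⟨ha0, ha, hne⟩
  · refine ⟨1, Nat.coprime_one_right _, 1, isUnit_one, fun q hq hq8 _ => ?_⟩
    have : Fact q.Prime := ⟨hq⟩
    rw [legendreSym.at_neg_one (by omega), ZMod.χ₄_nat_three_mod_four (by omega)]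
  lift a to ℕ using ha0.le
  rw [← Nat.prime_iff_prime_int] at ha
  rcases eq_or_ne a 2 with rfl | ha2
  · refine ⟨1, Nat.coprime_one_right _, 1, isUnit_one, fun q hq hq8 _ => ?_⟩
    have : Fact q.Prime := ⟨hq⟩
    rw [Nat.cast_ofNat, legendreSym.at_two (by omega), ZMod.χ₈_nat_mod_eight, hq8]
    rfl
  · obtain ⟨b, hb, hab⟩ := exists_isUnit_legendreSym_eq_neg_one ha ha2
    have hna : n.Coprime a := (Nat.coprime_primes hn ha).mpr (by exact_mod_cast hne.symm)
    exact ⟨a, (ha.coprime_eight ha2).mul_left hna, b, hb,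
      fun q hq hq8 hqb => hab q hq (by omega) hqb⟩

/-- The quadratic case of Artin's lemma on auxiliary primes: for an odd prime `p₁` and `p₂`
either `-1` or a positive prime different from `p₁`, there are infinitely many primes `q` with
`(p₁/q) = (p₂/q) = -1`. -/
theorem artin_auxiliary_primes (p₁ : ℕ) (hp₁ : p₁.Prime) (hodd : p₁ ≠ 2)
    (p₂ : ℤ) (hp₂ : p₂ = -1 ∨ (0 < p₂ ∧ Prime p₂ ∧ p₂ ≠ (p₁ : ℤ))) :
    {q : ℕ | ∃ hq : q.Prime,
      @legendreSym q ⟨hq⟩ (p₁ : ℤ) = -1 ∧ @legendreSym q ⟨hq⟩ p₂ = -1}.Infinite := by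
  obtain ⟨b₁, hb₁, hp₁q⟩ := exists_isUnit_legendreSym_eq_neg_one hp₁ hodd
  obtain ⟨m, hm, b₂, hb₂, hp₂q⟩ := exists_coprime_residue_legendreSym_eq_neg_one hp₁ hp₂
  obtain ⟨c, hc, hqc⟩ :=
    ZMod.exists_isUnit_natCast_eq_and_eq (hp₁.coprime_eight hodd) (a := 3) (by decide) hb₁
  obtain ⟨d, hd, hqd⟩ := ZMod.exists_isUnit_natCast_eq_and_eq hm hc hb₂
  have : NeZero m := ⟨by rintro rfl; simp at hm⟩
  have : NeZero p₁ := ⟨hp₁.ne_zero⟩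
  refine (Nat.infinite_setOfPred_prime_and_eq_mod hd).mono ?_
  rintro q ⟨hq, hq_d⟩
  obtain ⟨hq_c, hq_b₂⟩ := hqd q hq_d
  obtain ⟨hq_3, hq_b₁⟩ := hqc q hq_c
  have hq8 : q % 8 = 3 := by simpa using (ZMod.natCast_eq_natCast_iff' q 3 8).mp hq_3
  exact ⟨hq, hp₁q q hq (by omega) hq_b₁, hp₂q q hq hq8 hq_b₂⟩
end

section
/- Let p₁, …, p_r be distinct prime numbers and k₁, …, k_r positive natural numbers. Then there exists a modulus m, coprime to each p_j, and a subgroup U of R = (ℤ/mℤ)ˣ such that: (1) the quotient group R/U is cyclic; (2) for each j, the order of the coset of p_j in R/U is a multiple of k_j; and (3) the coset of -1 in R/U has order 2. -/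
/-!
A character `χ : (ZMod m)ˣ →* ℂˣ` does the job with `U = ker χ`: the quotient embeds into `ℂˣ`,
so it is cyclic, and the order of a coset is the order of its `χ`-value. So it suffices to find
`χ` with `χ (-1) = -1` such that the `ℓ`-adic valuation of the order of `χ (p j)` is large for
every `j` and every prime `ℓ ∣ k j`.

Such a `χ` is built one pair `(ℓ, a)` at a time. A prime `q ≠ ℓ` dividing
`Φ_{ℓ^E}(a) = ∑_{i<ℓ} (a^{ℓ^{E-1}})^i` is one modulo which `a` has order exactly `ℓ^E`; it exists
because `ℓ < Φ_{ℓ^E}(a)` and `ℓ² ∤ Φ_{ℓ^E}(a)`, and letting `E` grow gives infinitely many.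
Multiply `χ` by an injective character of `(ZMod q)ˣ` raised to the power `ℓ^e * t`, with `t` the
prime-to-`ℓ` part of `q - 1`. The new factor has `ℓ`-power order and kills `-1`; its valuation is
`E - e` at `a`, which beats the old one, and `v_ℓ(ord_q b) - e` at every other base `b`. As
valuations of orders of commuting elements behave ultrametrically, a choice of `e` among
`#P + 1` values avoiding all coincidences with the old valuations loses nothing.
-/

open Finset

theorem Nat.exists_prime_ne_dvd_of_lt_of_not_sq_dvd {ℓ N : ℕ} (hℓ : ℓ.Prime) (hN : ℓ < N)
    (hsq : ¬ ℓ ^ 2 ∣ N) : ∃ q, q.Prime ∧ q ≠ ℓ ∧ q ∣ N := by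
  by_contra! h
  have hk := Nat.eq_prime_pow_of_unique_prime_dvd (n := N) (p := ℓ) (by omega) fun hq hqN =>
    by_contra fun hne => h _ hq hne hqN
  rcases Nat.lt_or_ge N.primeFactorsList.length 2 with hk2 | hk2
  · have := Nat.pow_le_pow_right hℓ.pos (show N.primeFactorsList.length ≤ 1 by omega)
    rw [← hk, pow_one] at this
    omega
  · exact hsq (hk ▸ pow_dvd_pow ℓ hk2)

theorem lt_geom_sum_pow_prime_pow {ℓ n a : ℕ} (hℓ : ℓ.Prime) (ha : 1 < a) :
    ℓ ^ n < ∑ i ∈ range ℓ, (a ^ ℓ ^ n) ^ i :=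
  calc ℓ ^ n < a ^ ℓ ^ n := Nat.lt_pow_self ha
    _ = (a ^ ℓ ^ n) ^ 1 := (pow_one _).symm
    _ ≤ _ := single_le_sum (fun _ _ => Nat.zero_le _) (mem_range.2 hℓ.one_lt)

theorem not_sq_dvd_geom_sum_pow_prime_pow {ℓ n : ℕ} (hℓ : ℓ.Prime) (hn : 1 ≤ n) (a : ℕ) :
    ¬ ℓ ^ 2 ∣ ∑ i ∈ range ℓ, (a ^ ℓ ^ n) ^ i := by
  have := Fact.mk hℓ
  intro h
  have hdvd : ℓ ∣ ∑ i ∈ range ℓ, (a ^ ℓ ^ n) ^ i := (dvd_pow_self ℓ two_ne_zero).trans h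
  -- mod `ℓ`, `a ^ ℓ ^ n = a`, so `(a - 1) * Φ = a ^ ℓ - 1 = a - 1` forces `a ≡ 1`
  have ha : ((ℓ : ℕ) : ℤ) ∣ (a : ℤ) - 1 := by
    rw [← ZMod.intCast_zmod_eq_zero_iff_dvd]
    have := geom_sum_mul ((a : ZMod ℓ) ^ ℓ ^ n) ℓ
    rw [ZMod.pow_card_pow, ZMod.pow_card] at this
    have h0 : ∑ i ∈ range ℓ, ((a : ZMod ℓ) ^ ℓ ^ n) ^ i = 0 := by
      exact_mod_cast (ZMod.natCast_eq_zero_iff _ _).2 hdvd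
    rw [ZMod.pow_card_pow] at h0
    push_cast
    rw [← this, h0, zero_mul]
  -- hence `a ^ ℓ ^ n ≡ 1 [MOD ℓ ^ 2]`, and then `Φ ≡ ℓ [MOD ℓ ^ 2]`
  have hx : ((ℓ : ℕ) : ℤ) ^ 2 ∣ (a : ℤ) ^ ℓ ^ n - 1 := by
    have := dvd_sub_pow_of_dvd_sub ha n
    rw [one_pow] at this
    exact (pow_dvd_pow _ (by omega)).trans this
  have hx1 : ((a : ZMod (ℓ ^ 2))) ^ ℓ ^ n = 1 := by
    rw [← sub_eq_zero]
    exact_mod_cast (ZMod.intCast_zmod_eq_zero_iff_dvd _ _).2 (by exact_mod_cast hx)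
  have : ((ℓ : ℕ) : ZMod (ℓ ^ 2)) = 0 := by
    have h0 := (ZMod.natCast_eq_zero_iff _ _).2 h
    push_cast [hx1] at h0
    simpa using h0
  rw [ZMod.natCast_eq_zero_iff] at this
  exact absurd (Nat.le_of_dvd hℓ.pos this) (by nlinarith [hℓ.two_le])

open Polynomial in
theorem orderOf_eq_prime_pow_of_dvd_geom_sum {ℓ q n a : ℕ} (hℓ : ℓ.Prime) (hq : q.Prime)
    (hqℓ : q ≠ ℓ) (hdvd : q ∣ ∑ i ∈ range ℓ, (a ^ ℓ ^ n) ^ i) :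
    orderOf (a : ZMod q) = ℓ ^ (n + 1) := by
  have := Fact.mk hq
  have : NeZero ((ℓ ^ (n + 1) : ℕ) : ZMod q) := NeZero.of_not_dvd _ fun h =>
    hqℓ ((Nat.prime_dvd_prime_iff_eq hq hℓ).1 (hq.dvd_of_dvd_pow h))
  have hroot : IsRoot (cyclotomic (ℓ ^ (n + 1)) (ZMod q)) (a : ZMod q) := by
    rw [cyclotomic_prime_pow_eq_geom_sum hℓ, IsRoot.def]
    simpa [eval_finsetSum] using (ZMod.natCast_eq_zero_iff _ _).2 hdvd
  exact (isRoot_cyclotomic_iff.1 hroot).eq_orderOf.symm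

theorem exists_prime_orderOf_eq_prime_pow {ℓ n a : ℕ} (hℓ : ℓ.Prime) (hn : 1 ≤ n) (ha : 1 < a) :
    ∃ q, q.Prime ∧ orderOf (a : ZMod q) = ℓ ^ (n + 1) := by
  obtain ⟨q, hq, hqℓ, hdvd⟩ := Nat.exists_prime_ne_dvd_of_lt_of_not_sq_dvd hℓ
    ((Nat.le_self_pow (by omega) ℓ).trans_lt (lt_geom_sum_pow_prime_pow hℓ ha))
    (not_sq_dvd_geom_sum_pow_prime_pow hℓ hn a)
  exact ⟨q, hq, orderOf_eq_prime_pow_of_dvd_geom_sum hℓ hq hqℓ hdvd⟩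

theorem infinite_setOf_prime_orderOf_eq_prime_pow {ℓ a : ℕ} (hℓ : ℓ.Prime) (ha : 1 < a)
    (B : ℕ) : {q : ℕ | q.Prime ∧ ∃ E, B ≤ E ∧ orderOf (a : ZMod q) = ℓ ^ E}.Infinite := by
  choose q hq hord using fun n : ℕ =>
    exists_prime_orderOf_eq_prime_pow hℓ (n := n + B + 1) (by omega) ha
  refine Set.infinite_of_injective_forall_mem (fun n₁ n₂ h => ?_)
    fun n => ⟨hq n, _, by omega, hord n⟩
  have := Nat.pow_right_injective hℓ.two_le ((hord n₁).symm.trans (h ▸ hord n₂))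
  omega

theorem factorization_orderOf_pow {G : Type*} [Monoid G] {x : G} (hx : IsOfFinOrder x) {k : ℕ}
    (hk : k ≠ 0) (p : ℕ) :
    (orderOf (x ^ k)).factorization p = (orderOf x).factorization p - k.factorization p := by
  rw [orderOf_pow' x hk, Nat.factorization_div (Nat.gcd_dvd_left _ _),
    Nat.factorization_gcd hx.orderOf_pos.ne' hk]
  simp only [Finsupp.coe_tsub, Pi.sub_apply, Finsupp.inf_apply]
  omega

theorem factorization_orderOf_pow_mul_ordCompl {G : Type*} [Monoid G] {x : G} {n : ℕ}
    (hn : n ≠ 0) (hxn : x ^ n = 1) {ℓ : ℕ} (hℓ : ℓ.Prime) (e p : ℕ) :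
    (orderOf (x ^ (ℓ ^ e * ordCompl[ℓ] n))).factorization p =
      if p = ℓ then (orderOf x).factorization ℓ - e else 0 := by
  have hx : IsOfFinOrder x := isOfFinOrder_iff_pow_eq_one.2 ⟨n, Nat.pos_of_ne_zero hn, hxn⟩
  have hcompl := (Nat.ordCompl_pos ℓ hn).ne'
  rw [factorization_orderOf_pow hx (mul_ne_zero (pow_ne_zero _ hℓ.ne_zero) hcompl),
    Nat.factorization_mul (pow_ne_zero _ hℓ.ne_zero) hcompl, hℓ.factorization_pow,
    Nat.factorization_ordCompl]
  split_ifs with hp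
  · subst hp
    simp
  · have := (Nat.factorization_le_iff_dvd hx.orderOf_pos.ne' hn).2
      (orderOf_dvd_of_pow_eq_one hxn) p
    simp [hp, this]

theorem pow_mul_ordCompl_eq_one_of_sq_eq_one {G : Type*} [Monoid G] {x : G} {n : ℕ}
    (hn : n ≠ 0) (hxn : x ^ n = 1) (hx2 : x ^ 2 = 1) {ℓ e : ℕ} (hℓ : ℓ.Prime) (he : 1 ≤ e) :
    x ^ (ℓ ^ e * ordCompl[ℓ] n) = 1 := by
  have hx : IsOfFinOrder x := isOfFinOrder_iff_pow_eq_one.2 ⟨2, two_pos, hx2⟩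
  have hv : (orderOf x).factorization ℓ < 2 :=
    (Nat.factorization_lt _ hx.orderOf_pos.ne').trans_le
      (Nat.le_of_dvd two_pos (orderOf_dvd_of_pow_eq_one hx2))
  rw [← orderOf_eq_one_iff]
  refine ((Nat.factorization_eq_zero_iff' _).1 (Finsupp.ext fun p => ?_)).resolve_left
    (hx.pow).orderOf_pos.ne'
  rw [factorization_orderOf_pow_mul_ordCompl hn hxn hℓ]
  split_ifs <;> simp only [Finsupp.coe_zero, Pi.zero_apply]; omega

theorem factorization_orderOf_mul_le {G : Type*} [CommGroup G] {x y : G} (hx : IsOfFinOrder x)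
    (hy : IsOfFinOrder y) (p : ℕ) :
    (orderOf (x * y)).factorization p ≤
      max ((orderOf x).factorization p) ((orderOf y).factorization p) := by
  have h := (Nat.factorization_le_iff_dvd (hx.mul hy).orderOf_pos.ne'
    (Nat.lcm_ne_zero hx.orderOf_pos.ne' hy.orderOf_pos.ne')).2
    (Commute.all x y).orderOf_mul_dvd_lcm p
  rwa [Nat.factorization_lcm hx.orderOf_pos.ne' hy.orderOf_pos.ne'] at h

theorem factorization_orderOf_mul_of_ne {G : Type*} [CommGroup G] {x y : G}
    (hx : IsOfFinOrder x) (hy : IsOfFinOrder y) {p : ℕ}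
    (hne : (orderOf x).factorization p ≠ (orderOf y).factorization p) :
    (orderOf (x * y)).factorization p =
      max ((orderOf x).factorization p) ((orderOf y).factorization p) := by
  have hxy := factorization_orderOf_mul_le hx hy p
  have hy' := factorization_orderOf_mul_le hx.inv (hx.mul hy) p
  have hx' := factorization_orderOf_mul_le (hx.mul hy) hy.inv p
  simp only [inv_mul_cancel_left, mul_inv_cancel_right, orderOf_inv] at hx' hy'
  omega

theorem exists_mem_Icc_forall_tsub_ne {ι : Type*} (s : Finset ι) (c g : ι → ℕ) :
    ∃ e ∈ Icc 1 (#s + 1), ∀ i ∈ s, 0 < g i → c i - e ≠ g i := by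
  have hcard : #(s.image fun i => c i - g i) < #(Icc 1 (#s + 1)) := by
    simpa using card_image_le.trans_lt (Nat.lt_succ_self #s)
  obtain ⟨e, he, hes⟩ := exists_mem_notMem_of_card_lt_card hcard
  exact ⟨e, he, fun i hi hg hce => hes (mem_image.2 ⟨i, hi, by omega⟩)⟩

theorem exists_monoidHom_units_complex_injective (G : Type*) [Group G] [Finite G]
    [IsCyclic G] : ∃ χ : G →* ℂˣ, Function.Injective χ := by
  have : NeZero (Nat.card G) := ⟨Nat.card_pos.ne'⟩
  let e : G ≃* rootsOfUnity (Nat.card G) ℂ :=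
    mulEquivOfCyclicCardEq (Complex.card_rootsOfUnity _).symm
  exact ⟨(rootsOfUnity _ ℂ).subtype.comp e.toMonoidHom, Subtype.val_injective.comp e.injective⟩

theorem map_neg_one_eq_neg_one {R : Type*} [Ring R] (h : (-1 : Rˣ) ≠ 1) {χ : Rˣ →* ℂˣ}
    (hχ : Function.Injective χ) : χ (-1) = -1 := by
  have hsq : (χ (-1) : ℂ) * χ (-1) = 1 := by
    rw [← Units.val_mul, ← map_mul, neg_one_mul, neg_neg, map_one, Units.val_one]
  rcases mul_self_eq_one_iff.1 hsq with h1 | h1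
  · exact absurd (hχ ((Units.ext h1).trans (map_one χ).symm)) h
  · exact Units.ext h1

theorem MonoidHom.isCyclic_quotient_ker {G R : Type*} [Group G] [Finite G] [CommRing R]
    [IsDomain R] (φ : G →* Rˣ) : IsCyclic (G ⧸ φ.ker) :=
  isCyclic_of_injective_ringHom ((Units.coeHom R).comp (QuotientGroup.kerLift φ))
    (Units.val_injective.comp (QuotientGroup.kerLift_injective φ))

theorem MonoidHom.orderOf_mk_ker {G H : Type*} [Group G] [Group H] (φ : G →* H) (g : G) :
    orderOf (QuotientGroup.mk g : G ⧸ φ.ker) = orderOf (φ g) := by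
  rw [← orderOf_injective _ (QuotientGroup.kerLift_injective φ), QuotientGroup.kerLift_mk]

theorem ZMod.unitsMap_val_eq_natCast {m n b : ℕ} (h : n ∣ m) {u : (ZMod m)ˣ}
    (hu : (u : ZMod m) = b) : (unitsMap h u : ZMod n) = b := by
  rw [unitsMap_val, hu, cast_natCast h]

theorem ZMod.unitsMap_neg_one {m n : ℕ} (h : n ∣ m) : unitsMap h (-1) = -1 :=
  Units.ext (by simp [unitsMap_val, cast_neg h, cast_one h])

theorem ZMod.factorization_orderOf_map_lt {m : ℕ} [NeZero m] {H : Type*} [Monoid H]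
    (χ : (ZMod m)ˣ →* H) (u : (ZMod m)ˣ) (p : ℕ) : (orderOf (χ u)).factorization p < m :=
  (Nat.factorization_lt _ (χ.isOfFinOrder (isOfFinOrder_of_finite u)).orderOf_pos.ne').trans_le
    <|
    (Nat.le_of_dvd Nat.card_pos ((orderOf_map_dvd χ u).trans (orderOf_dvd_natCard u))).trans
      (by simpa using Nat.card_le_card_of_injective _ Units.val_injective (α := (ZMod m)ˣ))

def HasLargeOrderValuations {m : ℕ} (χ : (ZMod m)ˣ →* ℂˣ) (f : ℕ) (P : Finset (ℕ × ℕ)) :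
    Prop :=
  ∀ x ∈ P, ∀ u : (ZMod m)ˣ, (u : ZMod m) = x.2 → f ≤ (orderOf (χ u)).factorization x.1

theorem HasLargeOrderValuations.dvd_orderOf {m f b d : ℕ} [NeZero m] {χ : (ZMod m)ˣ →* ℂˣ}
    {P : Finset (ℕ × ℕ)} (hχ : HasLargeOrderValuations χ f P) (hd : 0 < d) (hdf : d ≤ f)
    (hdP : ∀ ℓ ∈ d.primeFactors, (ℓ, b) ∈ P) {u : (ZMod m)ˣ} (hu : (u : ZMod m) = b) :
    d ∣ orderOf (χ u) := by
  rw [← Nat.factorization_prime_le_iff_dvd hd.ne'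
    (χ.isOfFinOrder (isOfFinOrder_of_finite u)).orderOf_pos.ne']
  intro ℓ hℓ
  by_cases hℓd : ℓ ∣ d
  · exact (Nat.factorization_lt ℓ hd.ne').le.trans <| hdf.trans <|
      hχ (ℓ, b) (hdP ℓ (Nat.mem_primeFactors.2 ⟨hℓ, hℓd, hd.ne'⟩)) u hu
  · simp [Nat.factorization_eq_zero_of_not_dvd hℓd]

theorem exists_character_map_neg_one {N : ℕ} (hN : N ≠ 0) :
    ∃ m, 0 < m ∧ m.Coprime N ∧ ∃ χ : (ZMod m)ˣ →* ℂˣ, χ (-1) = -1 := by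
  obtain ⟨q, hNq, hq⟩ := Nat.exists_infinite_primes (N + 3)
  have := Fact.mk hq
  have : Fact (2 < q) := ⟨by omega⟩
  obtain ⟨χ, hχ⟩ := exists_monoidHom_units_complex_injective (ZMod q)ˣ
  exact ⟨q, hq.pos, Nat.coprime_of_lt_prime hN (by omega) hq, χ,
    map_neg_one_eq_neg_one (by simpa [Units.ext_iff] using ZMod.neg_one_ne_one) hχ⟩

theorem exists_character_insert_of_orderOf_eq {f m ℓ a q E : ℕ} [NeZero m] [NeZero q]
    (hf : 0 < f) (hℓ : ℓ.Prime) {P : Finset (ℕ × ℕ)} (hE : m + #P + 1 + f ≤ E)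
    (hord : orderOf (a : ZMod q) = ℓ ^ E) {χ : (ZMod m)ˣ →* ℂˣ} (hχ : χ (-1) = -1)
    (hP : HasLargeOrderValuations χ f P) {χq : (ZMod q)ˣ →* ℂˣ} (hχq : Function.Injective χq) :
    ∃ χ' : (ZMod (m * q))ˣ →* ℂˣ,
      χ' (-1) = -1 ∧ HasLargeOrderValuations χ' f (insert (ℓ, a) P) := by
  set n := Nat.card (ZMod q)ˣ
  have hn : n ≠ 0 := Nat.card_pos.ne'
  have hχqn v : χq v ^ n = 1 := by rw [← map_pow, pow_card_eq_one', map_one]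
  set π₁ := ZMod.unitsMap (dvd_mul_right m q)
  set π₂ := ZMod.unitsMap (dvd_mul_left q m)
  -- a unit is determined by its value, so `w` turns valuations at units into functions of `b`
  obtain ⟨w, hw⟩ := (Units.val_injective (α := ZMod (m * q))).hasLeftInverse
  obtain ⟨e, he, hgood⟩ := exists_mem_Icc_forall_tsub_ne P
    (fun x => (orderOf (χq (π₂ (w x.2)))).factorization x.1)
    (fun x => (orderOf (χ (π₁ (w x.2)))).factorization x.1)
  rw [mem_Icc] at he
  set k := ℓ ^ e * ordCompl[ℓ] n
  refine ⟨χ.comp π₁ * (powMonoidHom k).comp (χq.comp π₂), ?_, ?_⟩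
  · have hsq : χq (π₂ (-1)) ^ 2 = 1 := by rw [← map_pow, ← map_pow]; simp
    have hk : χq (π₂ (-1)) ^ k = 1 :=
      pow_mul_ordCompl_eq_one_of_sq_eq_one hn (hχqn _) hsq hℓ he.1
    simp [π₁, ZMod.unitsMap_neg_one, hχ, hk]
  intro x hx u hu
  have hX : IsOfFinOrder (χ (π₁ u)) := χ.isOfFinOrder (isOfFinOrder_of_finite _)
  have hY : IsOfFinOrder (χq (π₂ u) ^ k) := (χq.isOfFinOrder (isOfFinOrder_of_finite _)).pow
  have hvY : ∀ p, (orderOf (χq (π₂ u) ^ k)).factorization p =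
      if p = ℓ then (orderOf (χq (π₂ u))).factorization ℓ - e else 0 :=
    factorization_orderOf_pow_mul_ordCompl hn (hχqn (π₂ u)) hℓ e
  show f ≤ (orderOf (χ (π₁ u) * χq (π₂ u) ^ k)).factorization x.1
  rcases mem_insert.1 hx with rfl | hxP
  · have hvX := ZMod.factorization_orderOf_map_lt χ (π₁ u) ℓ
    have hE' : orderOf (χq (π₂ u)) = ℓ ^ E := by
      rw [orderOf_injective χq hχq, ← orderOf_units, ZMod.unitsMap_val_eq_natCast _ hu, hord]
    rw [factorization_orderOf_mul_of_ne hX hY] <;>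
      simp [hvY, hE', hℓ.factorization_pow] <;> omega
  · have hvX := hP x hxP (π₁ u) (ZMod.unitsMap_val_eq_natCast _ hu)
    have hne : (orderOf (χ (π₁ u))).factorization x.1 ≠
        (orderOf (χq (π₂ u) ^ k)).factorization x.1 := by
      rw [hvY]
      split_ifs with hxℓ
      · rw [← hw u, hu] at hvX ⊢
        subst hxℓ
        exact (hgood x hxP (by omega)).symm
      · omega
    rw [factorization_orderOf_mul_of_ne hX hY hne]
    exact hvX.trans (le_max_left _ _)

theorem exists_character_insert {N f m ℓ a : ℕ} [NeZero m] (hN : N ≠ 0) (hf : 0 < f)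
    (hℓ : ℓ.Prime) (ha : 1 < a) (hmN : m.Coprime N) {P : Finset (ℕ × ℕ)}
    {χ : (ZMod m)ˣ →* ℂˣ} (hχ : χ (-1) = -1) (hP : HasLargeOrderValuations χ f P) :
    ∃ m', 0 < m' ∧ m'.Coprime N ∧
      ∃ χ' : (ZMod m')ˣ →* ℂˣ,
        χ' (-1) = -1 ∧ HasLargeOrderValuations χ' f (insert (ℓ, a) P) := by
  obtain ⟨q, ⟨hq, E, hE, hord⟩, hNq⟩ :=
    (infinite_setOf_prime_orderOf_eq_prime_pow hℓ ha (m + #P + 1 + f)).exists_gt N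
  have := Fact.mk hq
  obtain ⟨χq, hχq⟩ := exists_monoidHom_units_complex_injective (ZMod q)ˣ
  exact ⟨m * q, Nat.mul_pos (Nat.pos_of_ne_zero (NeZero.ne m)) hq.pos,
    Nat.Coprime.mul_left hmN (Nat.coprime_of_lt_prime hN hNq hq),
    exists_character_insert_of_orderOf_eq hf hℓ hE hord hχ hP hχq⟩

theorem exists_character_hasLargeOrderValuations {N f : ℕ} (hN : N ≠ 0) (hf : 0 < f)
    (P : Finset (ℕ × ℕ)) (hP : ∀ x ∈ P, x.1.Prime ∧ 1 < x.2) :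
    ∃ m, 0 < m ∧ m.Coprime N ∧
      ∃ χ : (ZMod m)ˣ →* ℂˣ, χ (-1) = -1 ∧ HasLargeOrderValuations χ f P := by
  induction P using Finset.induction_on with
  | empty =>
    obtain ⟨m, hm, hmN, χ, hχ⟩ := exists_character_map_neg_one hN
    exact ⟨m, hm, hmN, χ, hχ, by simp [HasLargeOrderValuations]⟩
  | insert x P _ ih =>
    obtain ⟨m, hm, hmN, χ, hχ, hχP⟩ := ih fun y hy => hP y (mem_insert_of_mem hy)
    have : NeZero m := ⟨hm.ne'⟩
    obtain ⟨hℓ, ha⟩ := hP x (mem_insert_self x P)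
    exact exists_character_insert hN hf hℓ ha hmN hχ hχP

theorem hasse_lemma_general (r : ℕ) (p : Fin r → ℕ) (hp : ∀ j, (p j).Prime)
    (k : Fin r → ℕ) (hk : ∀ j, 0 < k j) :
    ∃ m : ℕ, (∀ j, Nat.Coprime m (p j)) ∧
      ∃ U : Subgroup (ZMod m)ˣ,
        IsCyclic ((ZMod m)ˣ ⧸ U) ∧
        (∀ j, ∃ u : (ZMod m)ˣ, (u : ZMod m) = ((p j : ℕ) : ZMod m) ∧
          k j ∣ orderOf (QuotientGroup.mk u : (ZMod m)ˣ ⧸ U)) ∧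
        orderOf (QuotientGroup.mk (-1 : (ZMod m)ˣ) : (ZMod m)ˣ ⧸ U) = 2 := by
  have hK : 0 < ∏ j, k j := prod_pos fun j _ => hk j
  obtain ⟨m, hm, hmN, χ, hχ, hχP⟩ := exists_character_hasLargeOrderValuations
    (N := ∏ j, p j) (f := ∏ j, k j) (prod_ne_zero_iff.2 fun j _ => (hp j).ne_zero) hK
    ((∏ j, k j).primeFactors ×ˢ univ.image p)
    (by simpa using fun ℓ b hℓ _ _ j hj => ⟨hℓ, hj ▸ (hp j).one_lt⟩)
  have : NeZero m := ⟨hm.ne'⟩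
  have hcop j : m.Coprime (p j) := hmN.coprime_dvd_right (dvd_prod_of_mem p (mem_univ j))
  refine ⟨m, hcop, χ.ker, χ.isCyclic_quotient_ker, fun j => ?_, ?_⟩
  · have hkK : k j ∣ ∏ j, k j := dvd_prod_of_mem k (mem_univ j)
    refine ⟨_, ZMod.coe_unitOfCoprime _ (hcop j).symm, ?_⟩
    rw [MonoidHom.orderOf_mk_ker]
    exact hχP.dvd_orderOf (hk j) (Nat.le_of_dvd hK hkK)
      (fun ℓ hℓ => mem_product.2
        ⟨Nat.primeFactors_mono hkK hK.ne' hℓ, mem_image_of_mem p (mem_univ j)⟩)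
      (ZMod.coe_unitOfCoprime _ _)
  · rw [MonoidHom.orderOf_mk_ker, hχ, ← orderOf_units, Units.val_neg, Units.val_one,
      orderOf_neg_one]
    simp

/-- Hasse's lemma on auxiliary moduli: given distinct primes `p₁, …, p_r` and positive
integers `k₁, …, k_r`, there is a modulus `m` coprime to the `p_j` and a subgroup `U` of
`R = (ℤ/mℤ)ˣ` such that `R/U` is cyclic, the order of the coset of `p_j` in `R/U` is a
multiple of `k_j` for each `j`, and the coset of `-1` has order `2` in `R/U`. -/
theorem hasse_lemma (r : ℕ) (p : Fin r → ℕ) (hp : ∀ j, (p j).Prime)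
    (hinj : Function.Injective p) (k : Fin r → ℕ) (hk : ∀ j, 0 < k j) :
    ∃ m : ℕ, (∀ j, Nat.Coprime m (p j)) ∧
      ∃ U : Subgroup (ZMod m)ˣ,
        IsCyclic ((ZMod m)ˣ ⧸ U) ∧
        (∀ j, ∃ u : (ZMod m)ˣ, (u : ZMod m) = ((p j : ℕ) : ZMod m) ∧
          k j ∣ orderOf (QuotientGroup.mk u : (ZMod m)ˣ ⧸ U)) ∧
        orderOf (QuotientGroup.mk (-1 : (ZMod m)ˣ) : (ZMod m)ˣ ⧸ U) = 2 :=
  hasse_lemma_general r p hp k hk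
end
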